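/- arXiv:2601.10910 — 6 statements merged into one kernel-verified Lean document; each statement's English description precedes it below -/
import Mathlib

section
/- Assume in addition a ≥ 1. Then for every t, η ∈ ℝ one has 0 ≤ (e^{−π²σ²(η−ξ₀)²} + a·e^{−π²σ²(η−ξ₁)²}) − |V(t,η)| ≤ 2a·e^{−π²σ²(Δ/2)²}; in particular the modulus |V(t,η)| differs from the sum of the moduli of the two single-component STFTs, e^{−π²σ²(η−ξ₀)²} and a·e^{−π²σ²(η−ξ₁)²}, by at most 2a·e^{−π²σ²Δ²/4} uniformly in (t,η). -/
/-!
Up to the unimodular factor `e^{2πiξ₀t}`, `V(t,η)` is the sum `x + y` of two complex numbers of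
moduli `e^{−π²σ²(η−ξ₀)²}` and `a·e^{−π²σ²(η−ξ₁)²}`. By the triangle inequality in both directions,
`‖x‖ + ‖y‖ − ‖x + y‖` lies between `0` and `2 min(‖x‖, ‖y‖)`. Since `η` is at distance at least
`Δ/2` from one of `ξ₀, ξ₁`, the smaller of the two Gaussians is at most `e^{−π²σ²(Δ/2)²}`, and
`a ≥ 1` lets the weight `a` absorb the unweighted one.
-/

noncomputable section

open MeasureTheory

/-- The closed-form STFT of the two-component harmonic signal
`f(x) = e^{2πiξ₀x} + a e^{2πiξ₁x}` with Gaussian window of bandwidth parameter `σ`. -/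
def Vst (ξ₀ ξ₁ a σ t η : ℝ) : ℂ :=
  Complex.exp (2 * Real.pi * Complex.I * ξ₀ * t) *
    ((Real.exp (-(Real.pi ^ 2 * σ ^ 2 * (η - ξ₀) ^ 2)) : ℂ) +
      (a : ℂ) * Complex.exp (2 * Real.pi * Complex.I * (ξ₁ - ξ₀) * t) *
        (Real.exp (-(Real.pi ^ 2 * σ ^ 2 * (η - ξ₁) ^ 2)) : ℂ))

open Real

lemma norm_add_norm_sub_norm_add_le_two_mul_min {E : Type*} [SeminormedAddCommGroup E]
    (x y : E) : ‖x‖ + ‖y‖ - ‖x + y‖ ≤ 2 * min ‖x‖ ‖y‖ := by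
  have hx : ‖x‖ ≤ ‖x + y‖ + ‖y‖ := by simpa using norm_sub_le (x + y) y
  have hy : ‖y‖ ≤ ‖x + y‖ + ‖x‖ := by simpa using norm_sub_le (x + y) x
  rw [mul_min_of_nonneg _ _ zero_le_two, le_min_iff]
  constructor <;> linarith

lemma sq_half_sub_le_max_sq_sub (ξ₀ ξ₁ η : ℝ) :
    ((ξ₁ - ξ₀) / 2) ^ 2 ≤ max ((η - ξ₀) ^ 2) ((η - ξ₁) ^ 2) := by
  rcases le_total ((η - ξ₀) ^ 2) ((η - ξ₁) ^ 2) with h | h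
  · rw [max_eq_right h]; nlinarith [sq_nonneg (2 * η - ξ₀ - ξ₁)]
  · rw [max_eq_left h]; nlinarith [sq_nonneg (2 * η - ξ₀ - ξ₁)]

lemma min_exp_neg_mul_sq_sub_le {c : ℝ} (hc : 0 ≤ c) (ξ₀ ξ₁ η : ℝ) :
    min (exp (-(c * (η - ξ₀) ^ 2))) (exp (-(c * (η - ξ₁) ^ 2))) ≤
      exp (-(c * ((ξ₁ - ξ₀) / 2) ^ 2)) := by
  rcases le_max_iff.1 (sq_half_sub_le_max_sq_sub ξ₀ ξ₁ η) with h | h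
  · exact (min_le_left _ _).trans <| exp_le_exp.2 <| neg_le_neg <| mul_le_mul_of_nonneg_left h hc
  · exact (min_le_right _ _).trans <| exp_le_exp.2 <| neg_le_neg <| mul_le_mul_of_nonneg_left h hc

lemma norm_cexp_two_pi_I_mul_mul (x y : ℝ) :
    ‖Complex.exp (2 * π * Complex.I * x * y)‖ = 1 := by
  rw [← Complex.norm_exp_ofReal_mul_I (2 * π * x * y)]
  push_cast
  ring_nf

lemma norm_Vst (ξ₀ ξ₁ a σ t η : ℝ) :
    ‖Vst ξ₀ ξ₁ a σ t η‖ =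
      ‖(exp (-(π ^ 2 * σ ^ 2 * (η - ξ₀) ^ 2)) : ℂ) +
        a * Complex.exp (2 * π * Complex.I * (ξ₁ - ξ₀ : ℝ) * t) *
          (exp (-(π ^ 2 * σ ^ 2 * (η - ξ₁) ^ 2)) : ℂ)‖ := by
  rw [Vst, norm_mul, norm_cexp_two_pi_I_mul_mul, one_mul, Complex.ofReal_sub]

theorem stmt0_general (ξ₀ ξ₁ a σ : ℝ) (ha1 : 1 ≤ a) :
    ∀ t η : ℝ,
      0 ≤ (Real.exp (-(Real.pi ^ 2 * σ ^ 2 * (η - ξ₀) ^ 2)) +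
            a * Real.exp (-(Real.pi ^ 2 * σ ^ 2 * (η - ξ₁) ^ 2))) - ‖Vst ξ₀ ξ₁ a σ t η‖ ∧
      (Real.exp (-(Real.pi ^ 2 * σ ^ 2 * (η - ξ₀) ^ 2)) +
            a * Real.exp (-(Real.pi ^ 2 * σ ^ 2 * (η - ξ₁) ^ 2))) - ‖Vst ξ₀ ξ₁ a σ t η‖
        ≤ 2 * a * Real.exp (-(Real.pi ^ 2 * σ ^ 2 * ((ξ₁ - ξ₀) / 2) ^ 2)) := by
  intro t η
  set A := exp (-(π ^ 2 * σ ^ 2 * (η - ξ₀) ^ 2))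
  set B := exp (-(π ^ 2 * σ ^ 2 * (η - ξ₁) ^ 2))
  set x : ℂ := (A : ℂ)
  set y : ℂ := a * Complex.exp (2 * π * Complex.I * (ξ₁ - ξ₀ : ℝ) * t) * B
  have hx : ‖x‖ = A := by rw [Complex.norm_real, norm_of_nonneg (exp_pos _).le]
  have hy : ‖y‖ = a * B := by
    rw [norm_mul, norm_mul, norm_cexp_two_pi_I_mul_mul, mul_one, Complex.norm_real,
      Complex.norm_real, norm_of_nonneg (by linarith), norm_of_nonneg (exp_pos _).le]
  have hmin : min A (a * B) ≤ a * exp (-(π ^ 2 * σ ^ 2 * ((ξ₁ - ξ₀) / 2) ^ 2)) :=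
    calc min A (a * B) ≤ min (a * A) (a * B) :=
          min_le_min_right _ (le_mul_of_one_le_left (exp_pos _).le ha1)
      _ = a * min A B := (mul_min_of_nonneg _ _ (by linarith)).symm
      _ ≤ _ := mul_le_mul_of_nonneg_left (min_exp_neg_mul_sq_sub_le (by positivity) ξ₀ ξ₁ η)
          (by linarith)
  rw [norm_Vst, ← hx, ← hy]
  refine ⟨sub_nonneg.2 (norm_add_le x y), ?_⟩
  calc ‖x‖ + ‖y‖ - ‖x + y‖ ≤ 2 * min ‖x‖ ‖y‖ := norm_add_norm_sub_norm_add_le_two_mul_min x y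
    _ ≤ 2 * a * exp (-(π ^ 2 * σ ^ 2 * ((ξ₁ - ξ₀) / 2) ^ 2)) := by rw [hx, hy]; linarith

/-- for `a ≥ 1`, the modulus of the two-component STFT differs from the sum of
the moduli of the single-component STFTs by at most `2a·e^{−π²σ²(Δ/2)²}`, uniformly in `(t,η)`,
and the difference is nonnegative. -/
theorem stmt0 (ξ₀ ξ₁ a σ : ℝ) (hξ : ξ₀ < ξ₁) (ha : 0 < a) (ha1 : 1 ≤ a) (hσ : 0 < σ) :
    ∀ t η : ℝ,
      0 ≤ (Real.exp (-(Real.pi ^ 2 * σ ^ 2 * (η - ξ₀) ^ 2)) +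
            a * Real.exp (-(Real.pi ^ 2 * σ ^ 2 * (η - ξ₁) ^ 2))) - ‖Vst ξ₀ ξ₁ a σ t η‖ ∧
      (Real.exp (-(Real.pi ^ 2 * σ ^ 2 * (η - ξ₀) ^ 2)) +
            a * Real.exp (-(Real.pi ^ 2 * σ ^ 2 * (η - ξ₁) ^ 2))) - ‖Vst ξ₀ ξ₁ a σ t η‖
        ≤ 2 * a * Real.exp (-(Real.pi ^ 2 * σ ^ 2 * ((ξ₁ - ξ₀) / 2) ^ 2)) :=
  stmt0_general ξ₀ ξ₁ a σ ha1
end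
end

section
/- There is a unique s > 0 satisfying ln(s/a) = (1/2)(s − 1/s). Set Δ_c = (1+s)/(πσ√(2s)). Then the function g(η) = e^{−π²σ²(η−ξ₀)²} + a·e^{−π²σ²(η−ξ₁)²} (which equals |V(t_k⁺, η)| at every constructive time t_k⁺) has exactly one local-maximum point on ℝ when Δ ≤ Δ_c, and exactly two local-maximum points on ℝ when Δ > Δ_c. -/
noncomputable section

open MeasureTheory

/-- The modulus of the STFT at constructive times: sum of two Gaussian bumps. -/
def gSum (ξ₀ ξ₁ a σ η : ℝ) : ℝ :=
  Real.exp (-(Real.pi ^ 2 * σ ^ 2 * (η - ξ₀) ^ 2)) +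
    a * Real.exp (-(Real.pi ^ 2 * σ ^ 2 * (η - ξ₁) ^ 2))

/-!
After the affine change of variable `u = πσ(η - ξ₀)`, `g` becomes
`G(u) = e^{-u²} + a e^{-(u-D)²}` with `D = πσΔ`. `G` increases for `u ≤ 0`, decreases for
`u ≥ D`, and on `(0, D)` the sign of `-G'` is that of
`F(u) = log (u e^{-u²}) - log (a (D - u) e^{-(u-D)²})`, a function tending to `-∞` at `0` and to
`+∞` at `D` whose derivative has the sign of `q(u) = 2u² - 2Du + 1`. So `F` is increasing when
`D² ≤ 2`, and otherwise increases, decreases and increases again between the roots `m < M` of `q`.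

The defining equation of `s` reads `ψ (log s) = -log a` with `ψ = sinh - id`, a strictly increasing
bijection of `ℝ`. At a root `u` of `q` one finds `F(u) = ψ (log s) - ψ (log (2u²))`, so `F(u)` has
the sign of `s - 2u²`. Hence `F` changes sign three times, and `G` has two local maxima, exactly
when `m < √(s/2) < M`, i.e. when `q(√(s/2)) < 0`, which is `D √(2s) > 1 + s`.
-/

open Real Set Filter Topology

section LocalMax

variable {g : ℝ → ℝ}

theorem StrictMonoOn.not_isLocalMax {x b : ℝ} (h : StrictMonoOn g (Icc x b)) (hx : x < b) :
    ¬IsLocalMax g x := fun hmax => by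
  obtain ⟨y, hyx, hy⟩ :=
    ((hmax.filter_mono nhdsWithin_le_nhds).and (Ioo_mem_nhdsGT hx)).exists
  exact (h ⟨le_rfl, hx.le⟩ ⟨hy.1.le, hy.2.le⟩ hy.1).not_ge hyx

theorem StrictAntiOn.not_isLocalMax {b x : ℝ} (h : StrictAntiOn g (Icc b x)) (hx : b < x) :
    ¬IsLocalMax g x := fun hmax => by
  obtain ⟨y, hyx, hy⟩ :=
    ((hmax.filter_mono nhdsWithin_le_nhds).and (Ioo_mem_nhdsLT hx)).exists
  exact (h ⟨hy.1.le, hy.2.le⟩ ⟨hx.le, le_rfl⟩ hy.2).not_ge hyx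

theorem isLocalMax_of_strictMonoOn_of_strictAntiOn {a r b : ℝ} (har : a < r) (hrb : r < b)
    (hmono : StrictMonoOn g (Icc a r)) (hanti : StrictAntiOn g (Icc r b)) : IsLocalMax g r :=
  isLocalMax_of_mono_anti har hrb (hmono.monotoneOn.mono Ioc_subset_Icc_self)
    (hanti.antitoneOn.mono Ico_subset_Icc_self)

theorem setOf_isLocalMax_eq_singleton {r : ℝ} (hmono : StrictMonoOn g (Iic r))
    (hanti : StrictAntiOn g (Ici r)) : {x | IsLocalMax g x} = {r} := by
  ext x
  refine ⟨fun hx => ?_, fun hx => hx ▸ ?_⟩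
  · rcases lt_trichotomy x r with hxr | hxr | hxr
    · exact absurd hx ((hmono.mono Icc_subset_Iic_self).not_isLocalMax hxr)
    · exact hxr
    · exact absurd hx ((hanti.mono Icc_subset_Ici_self).not_isLocalMax hxr)
  · exact isLocalMax_of_strictMonoOn_of_strictAntiOn (sub_one_lt r) (lt_add_one r)
      (hmono.mono Icc_subset_Iic_self) (hanti.mono Icc_subset_Ici_self)

theorem setOf_isLocalMax_eq_pair {r₁ r₂ r₃ : ℝ} (h₁₂ : r₁ < r₂) (h₂₃ : r₂ < r₃)
    (hmono₁ : StrictMonoOn g (Iic r₁)) (hanti₁ : StrictAntiOn g (Icc r₁ r₂))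
    (hmono₂ : StrictMonoOn g (Icc r₂ r₃)) (hanti₂ : StrictAntiOn g (Ici r₃)) :
    {x | IsLocalMax g x} = {r₁, r₃} := by
  ext x
  refine ⟨fun hx => ?_, fun hx => ?_⟩
  · rcases lt_trichotomy x r₁ with hx₁ | rfl | hx₁
    · exact absurd hx ((hmono₁.mono Icc_subset_Iic_self).not_isLocalMax hx₁)
    · exact Or.inl rfl
    rcases le_or_gt x r₂ with hx₂ | hx₂
    · exact absurd hx ((hanti₁.mono (Icc_subset_Icc_right hx₂)).not_isLocalMax hx₁)
    rcases lt_trichotomy x r₃ with hx₃ | rfl | hx₃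
    · exact absurd hx ((hmono₂.mono (Icc_subset_Icc_left hx₂.le)).not_isLocalMax hx₃)
    · exact Or.inr rfl
    · exact absurd hx ((hanti₂.mono Icc_subset_Ici_self).not_isLocalMax hx₃)
  · rcases hx with rfl | rfl
    · exact isLocalMax_of_strictMonoOn_of_strictAntiOn (sub_one_lt x) h₁₂
        (hmono₁.mono Icc_subset_Iic_self) hanti₁
    · exact isLocalMax_of_strictMonoOn_of_strictAntiOn h₂₃ (lt_add_one x) hmono₂
        (hanti₂.mono Icc_subset_Ici_self)

end LocalMax

theorem Homeomorph.isLocalMax_comp_iff {X Y β : Type*} [TopologicalSpace X]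
    [TopologicalSpace Y] [Preorder β] (e : X ≃ₜ Y) {f : Y → β} {x : X} :
    IsLocalMax (f ∘ e) x ↔ IsLocalMax f (e x) := by
  refine ⟨fun h => ?_, fun h => h.comp_continuous e.continuous.continuousAt⟩
  have h' : IsLocalMax (f ∘ e) (e.symm (e x)) := by rwa [e.symm_apply_apply]
  simpa [Function.comp_def] using h'.comp_continuous e.symm.continuous.continuousAt

theorem Homeomorph.ncard_setOf_isLocalMax_comp {X Y β : Type*} [TopologicalSpace X]
    [TopologicalSpace Y] [Preorder β] (e : X ≃ₜ Y) (f : Y → β) :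
    {x | IsLocalMax (f ∘ e) x}.ncard = {y | IsLocalMax f y}.ncard := by
  have : {x | IsLocalMax (f ∘ e) x} = e ⁻¹' {y | IsLocalMax f y} :=
    Set.ext fun _ => e.isLocalMax_comp_iff
  rw [this, Set.ncard_preimage_of_injective_subset_range e.injective (by simp)]

theorem Real.sub_four_le_sinh_sub_self {x : ℝ} (hx : 0 ≤ x) : x - 4 ≤ sinh x - x := by
  have hexp := quadratic_le_exp_of_nonneg hx
  have hexp_neg : exp (-x) ≤ 1 := exp_le_one_iff.mpr (neg_nonpos.mpr hx)
  rw [sinh_eq]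
  nlinarith [sq_nonneg (x - 3)]

theorem Real.existsUnique_sinh_sub_self_eq (c : ℝ) : ∃! x, sinh x - x = c := by
  set X := |c| + 4
  have hX : 0 ≤ X := by positivity
  have hup : c ≤ sinh X - X := by
    linarith [le_abs_self c, Real.sub_four_le_sinh_sub_self hX]
  have hdown : sinh (-X) - -X ≤ c := by
    rw [sinh_neg]
    linarith [neg_abs_le c, Real.sub_four_le_sinh_sub_self hX]
  obtain ⟨x, -, hx⟩ := intermediate_value_Icc (neg_le_self hX)
    (continuous_sinh.sub continuous_id).continuousOn ⟨hdown, hup⟩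
  exact ⟨x, hx, fun y hy => sinh_sub_id_strictMono.injective (hy.trans hx.symm)⟩

theorem log_div_eq_iff_sinh_log_sub_log {a s : ℝ} (ha : 0 < a) (hs : 0 < s) :
    log (s / a) = 1 / 2 * (s - 1 / s) ↔ sinh (log s) - log s = -log a := by
  rw [log_div hs.ne' ha.ne', sinh_log hs, one_div s]
  constructor <;> intro h <;> linarith

theorem existsUnique_log_div_eq {a : ℝ} (ha : 0 < a) :
    ∃! s : ℝ, 0 < s ∧ log (s / a) = 1 / 2 * (s - 1 / s) := by
  obtain ⟨x, hx, huniq⟩ := Real.existsUnique_sinh_sub_self_eq (-log a)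
  refine ⟨exp x, ⟨exp_pos x, ?_⟩, fun s ⟨hs, hroot⟩ => ?_⟩
  · rwa [log_div_eq_iff_sinh_log_sub_log ha (exp_pos x), log_exp]
  · rw [← huniq (log s) ((log_div_eq_iff_sinh_log_sub_log ha hs).mp hroot), exp_log hs]

def gaussPair (a D u : ℝ) : ℝ := exp (-u ^ 2) + a * exp (-(u - D) ^ 2)

def logRatio (a D u : ℝ) : ℝ := log u - log (D - u) - log a + D * (D - 2 * u)

section GaussPair

variable {a D u : ℝ}

theorem hasDerivAt_gaussPair (a D u : ℝ) :
    HasDerivAt (gaussPair a D)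
      (2 * (a * (D - u) * exp (-(u - D) ^ 2) - u * exp (-u ^ 2))) u := by
  have h₀ : HasDerivAt (fun u : ℝ => -u ^ 2) (-(2 * u)) u := by
    simpa using (hasDerivAt_pow 2 u).fun_neg
  have h₁ : HasDerivAt (fun u : ℝ => -(u - D) ^ 2) (-(2 * (u - D))) u := by
    simpa using (((hasDerivAt_id u).sub_const D).pow 2).fun_neg
  exact (h₀.exp.fun_add (h₁.exp.const_mul a)).congr_deriv (by ring)

theorem continuous_gaussPair (a D : ℝ) : Continuous (gaussPair a D) :=
  continuous_iff_continuousAt.mpr fun u => (hasDerivAt_gaussPair a D u).continuousAt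

theorem logRatio_eq_log_sub_log (ha : 0 < a) (hu : 0 < u) (huD : u < D) :
    logRatio a D u = log (u * exp (-u ^ 2)) - log (a * (D - u) * exp (-(u - D) ^ 2)) := by
  rw [log_mul hu.ne' (exp_ne_zero _), log_mul (by nlinarith) (exp_ne_zero _),
    log_mul ha.ne' (by linarith), log_exp, log_exp, logRatio]
  ring

theorem deriv_gaussPair_pos_iff (ha : 0 < a) (hu : 0 < u) (huD : u < D) :
    0 < deriv (gaussPair a D) u ↔ logRatio a D u < 0 := by
  rw [(hasDerivAt_gaussPair a D u).deriv, logRatio_eq_log_sub_log ha hu huD, sub_neg,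
    log_lt_log_iff (by positivity) (mul_pos (mul_pos ha (by linarith)) (exp_pos _))]
  constructor <;> intro h <;> linarith

theorem deriv_gaussPair_neg_iff (ha : 0 < a) (hu : 0 < u) (huD : u < D) :
    deriv (gaussPair a D) u < 0 ↔ 0 < logRatio a D u := by
  rw [(hasDerivAt_gaussPair a D u).deriv, logRatio_eq_log_sub_log ha hu huD, sub_pos,
    log_lt_log_iff (mul_pos (mul_pos ha (by linarith)) (exp_pos _)) (by positivity)]
  constructor <;> intro h <;> linarith

theorem deriv_gaussPair_pos_of_nonpos (ha : 0 < a) (hD : 0 < D) (hu : u ≤ 0) :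
    0 < deriv (gaussPair a D) u := by
  rw [(hasDerivAt_gaussPair a D u).deriv]
  have : 0 < a * (D - u) * exp (-(u - D) ^ 2) := mul_pos (mul_pos ha (by linarith)) (exp_pos _)
  nlinarith [exp_pos (-u ^ 2)]

theorem deriv_gaussPair_neg_of_le (ha : 0 < a) (hD : 0 < D) (hu : D ≤ u) :
    deriv (gaussPair a D) u < 0 := by
  rw [(hasDerivAt_gaussPair a D u).deriv]
  have : 0 < u * exp (-u ^ 2) := mul_pos (by linarith) (exp_pos _)
  nlinarith [mul_nonneg ha.le (exp_pos (-(u - D) ^ 2)).le]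

theorem gaussPair_strictMonoOn_Icc (ha : 0 < a) {x y : ℝ} (hx : 0 ≤ x) (hy : y ≤ D)
    (hF : ∀ u ∈ Ioo x y, logRatio a D u < 0) : StrictMonoOn (gaussPair a D) (Icc x y) :=
  strictMonoOn_of_deriv_pos (convex_Icc x y) (continuous_gaussPair a D).continuousOn
    fun u hu => by
      rw [interior_Icc] at hu
      exact (deriv_gaussPair_pos_iff ha (hx.trans_lt hu.1) (hu.2.trans_le hy)).mpr (hF u hu)

theorem gaussPair_strictAntiOn_Icc (ha : 0 < a) {x y : ℝ} (hx : 0 ≤ x) (hy : y ≤ D)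
    (hF : ∀ u ∈ Ioo x y, 0 < logRatio a D u) : StrictAntiOn (gaussPair a D) (Icc x y) :=
  strictAntiOn_of_deriv_neg (convex_Icc x y) (continuous_gaussPair a D).continuousOn
    fun u hu => by
      rw [interior_Icc] at hu
      exact (deriv_gaussPair_neg_iff ha (hx.trans_lt hu.1) (hu.2.trans_le hy)).mpr (hF u hu)

theorem gaussPair_strictMonoOn_Iic (ha : 0 < a) (hD : 0 < D) {r : ℝ} (hr : r ≤ D)
    (hF : ∀ u ∈ Ioo 0 r, logRatio a D u < 0) : StrictMonoOn (gaussPair a D) (Iic r) :=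
  strictMonoOn_of_deriv_pos (convex_Iic r) (continuous_gaussPair a D).continuousOn
    fun u hu => by
      rw [interior_Iic] at hu
      rcases le_or_gt u 0 with hu₀ | hu₀
      · exact deriv_gaussPair_pos_of_nonpos ha hD hu₀
      · exact (deriv_gaussPair_pos_iff ha hu₀ (hu.trans_le hr)).mpr (hF u ⟨hu₀, hu⟩)

theorem gaussPair_strictAntiOn_Ici (ha : 0 < a) (hD : 0 < D) {r : ℝ} (hr : 0 ≤ r)
    (hF : ∀ u ∈ Ioo r D, 0 < logRatio a D u) : StrictAntiOn (gaussPair a D) (Ici r) :=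
  strictAntiOn_of_deriv_neg (convex_Ici r) (continuous_gaussPair a D).continuousOn
    fun u hu => by
      rw [interior_Ici] at hu
      rcases lt_or_ge u D with huD | huD
      · exact (deriv_gaussPair_neg_iff ha (hr.trans_lt hu) huD).mpr (hF u ⟨hu, huD⟩)
      · exact deriv_gaussPair_neg_of_le ha hD huD

end GaussPair

section LogRatio

variable {a D u : ℝ}

theorem hasDerivAt_logRatio (hu : 0 < u) (huD : u < D) :
    HasDerivAt (logRatio a D) (D * (2 * u ^ 2 - 2 * D * u + 1) / (u * (D - u))) u := by
  have hDu : D - u ≠ 0 := (sub_pos.mpr huD).ne'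
  have h := ((((hasDerivAt_log hu.ne').sub ((hasDerivAt_id u).const_sub D |>.log hDu)).sub_const
    (log a)).add (((hasDerivAt_id u).const_mul 2).const_sub D |>.const_mul D))
  refine h.congr_deriv ?_
  simp only [id]
  field_simp
  ring

theorem continuousOn_logRatio : ContinuousOn (logRatio a D) (Ioo 0 D) :=
  fun _ hu => (hasDerivAt_logRatio hu.1 hu.2).continuousAt.continuousWithinAt

theorem logRatio_strictMonoOn {S : Set ℝ} (hS : Convex ℝ S) (hSD : S ⊆ Ioo 0 D)
    (hq : ∀ u ∈ interior S, 0 < 2 * u ^ 2 - 2 * D * u + 1) : StrictMonoOn (logRatio a D) S :=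
  strictMonoOn_of_deriv_pos hS (continuousOn_logRatio.mono hSD) fun u hu => by
    obtain ⟨hu₀, huD⟩ := hSD (interior_subset hu)
    rw [(hasDerivAt_logRatio hu₀ huD).deriv]
    exact div_pos (mul_pos (hu₀.trans huD) (hq u hu)) (mul_pos hu₀ (sub_pos.mpr huD))

theorem logRatio_strictAntiOn {S : Set ℝ} (hS : Convex ℝ S) (hSD : S ⊆ Ioo 0 D)
    (hq : ∀ u ∈ interior S, 2 * u ^ 2 - 2 * D * u + 1 < 0) : StrictAntiOn (logRatio a D) S :=
  strictAntiOn_of_deriv_neg hS (continuousOn_logRatio.mono hSD) fun u hu => by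
    obtain ⟨hu₀, huD⟩ := hSD (interior_subset hu)
    rw [(hasDerivAt_logRatio hu₀ huD).deriv]
    exact div_neg_of_neg_of_pos (mul_neg_of_pos_of_neg (hu₀.trans huD) (hq u hu))
      (mul_pos hu₀ (sub_pos.mpr huD))

theorem logRatio_inv_sub (a D u : ℝ) : logRatio a⁻¹ D (D - u) = -logRatio a D u := by
  simp only [logRatio, log_inv, sub_sub_cancel]
  ring

theorem eventually_logRatio_neg (hD : 0 < D) : ∀ᶠ u in 𝓝[>] 0, logRatio a D u < 0 := by
  have hcont : ContinuousAt (fun u => -log (D - u) - log a + D * (D - 2 * u)) 0 := by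
    have : ContinuousAt (fun u => D - u) 0 := by fun_prop
    exact ((this.log (by simpa using hD.ne')).neg.sub continuousAt_const).add (by fun_prop)
  have h := tendsto_log_nhdsGT_zero.atBot_add (hcont.tendsto.mono_left nhdsWithin_le_nhds)
  filter_upwards [h.eventually (eventually_lt_atBot 0)] with u hu
  simpa only [logRatio, sub_eq_add_neg, add_assoc] using hu

theorem exists_logRatio_neg (hD : 0 < D) {c : ℝ} (hc : 0 < c) :
    ∃ u ∈ Ioo 0 c, logRatio a D u < 0 :=
  let ⟨u, hu, hmem⟩ := ((eventually_logRatio_neg hD).and (Ioo_mem_nhdsGT hc)).exists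
  ⟨u, hmem, hu⟩

theorem exists_logRatio_pos (hD : 0 < D) {c : ℝ} (hc : c < D) :
    ∃ u ∈ Ioo c D, 0 < logRatio a D u := by
  obtain ⟨v, hv, hneg⟩ := exists_logRatio_neg (a := a⁻¹) hD (sub_pos.mpr hc)
  refine ⟨D - v, ⟨by linarith [hv.2], by linarith [hv.1]⟩, ?_⟩
  have := logRatio_inv_sub a⁻¹ D v
  rw [inv_inv] at this
  linarith

theorem exists_logRatio_eq_zero {x y : ℝ} (hx : 0 < x) (hxy : x ≤ y) (hy : y < D)
    (hsign : logRatio a D x * logRatio a D y < 0) : ∃ r ∈ Ioo x y, logRatio a D r = 0 := by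
  have hcont : ContinuousOn (logRatio a D) (uIcc x y) :=
    continuousOn_logRatio.mono (by rw [uIcc_of_le hxy]; exact Icc_subset_Ioo hx hy)
  have hzero : (0 : ℝ) ∈ uIcc (logRatio a D x) (logRatio a D y) := by
    rcases mul_neg_iff.mp hsign with h | h
    · exact mem_uIcc.mpr (Or.inr ⟨h.2.le, h.1.le⟩)
    · exact mem_uIcc.mpr (Or.inl ⟨h.1.le, h.2.le⟩)
  obtain ⟨r, hr, hFr⟩ := intermediate_value_uIcc hcont hzero
  rw [uIcc_of_le hxy] at hr
  refine ⟨r, ⟨lt_of_le_of_ne hr.1 ?_, lt_of_le_of_ne hr.2 ?_⟩, hFr⟩ <;> rintro rfl <;> simp_all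

theorem exists_logRatio_eq_zero_Ioo_zero (hD : 0 < D) {c : ℝ} (hc : c ∈ Ioo 0 D)
    (hpos : 0 < logRatio a D c) : ∃ r ∈ Ioo 0 c, logRatio a D r = 0 := by
  obtain ⟨x, hx, hneg⟩ := exists_logRatio_neg (a := a) hD hc.1
  obtain ⟨r, hr, hFr⟩ := exists_logRatio_eq_zero hx.1 hx.2.le hc.2 (mul_neg_of_neg_of_pos hneg hpos)
  exact ⟨r, ⟨hx.1.trans hr.1, hr.2⟩, hFr⟩

theorem exists_logRatio_eq_zero_Ioo_right (hD : 0 < D) {c : ℝ} (hc : c ∈ Ioo 0 D)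
    (hneg : logRatio a D c < 0) : ∃ r ∈ Ioo c D, logRatio a D r = 0 := by
  obtain ⟨x, hx, hpos⟩ := exists_logRatio_pos (a := a) hD hc.2
  obtain ⟨r, hr, hFr⟩ := exists_logRatio_eq_zero hc.1 hx.1.le hx.2 (mul_neg_of_neg_of_pos hneg hpos)
  exact ⟨r, ⟨hr.1, hr.2.trans hx.2⟩, hFr⟩

theorem logRatio_of_critical (ha : 0 < a) (hu : 0 < u) (hq : 2 * u ^ 2 - 2 * D * u + 1 = 0)
    {s : ℝ} (hs : 0 < s) (hroot : log (s / a) = 1 / 2 * (s - 1 / s)) :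
    logRatio a D u = (sinh (log s) - log s) - (sinh (log (2 * u ^ 2)) - log (2 * u ^ 2)) := by
  have hD : D = u + (2 * u)⁻¹ := by field_simp; linarith
  have hψ := (log_div_eq_iff_sinh_log_sub_log ha hs).mp hroot
  rw [hψ, logRatio, sinh_log (by positivity), hD, add_sub_cancel_left, log_inv,
    log_mul two_ne_zero hu.ne', log_mul two_ne_zero (by positivity), log_pow]
  field_simp
  ring

theorem logRatio_pos_iff_of_critical (ha : 0 < a) (hu : 0 < u)
    (hq : 2 * u ^ 2 - 2 * D * u + 1 = 0) {s : ℝ} (hs : 0 < s)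
    (hroot : log (s / a) = 1 / 2 * (s - 1 / s)) : 0 < logRatio a D u ↔ 2 * u ^ 2 < s := by
  rw [logRatio_of_critical ha hu hq hs hroot, sub_pos, ← log_lt_log_iff (by positivity) hs]
  exact sinh_sub_id_strictMono.lt_iff_lt

theorem logRatio_nonneg_iff_of_critical (ha : 0 < a) (hu : 0 < u)
    (hq : 2 * u ^ 2 - 2 * D * u + 1 = 0) {s : ℝ} (hs : 0 < s)
    (hroot : log (s / a) = 1 / 2 * (s - 1 / s)) : 0 ≤ logRatio a D u ↔ 2 * u ^ 2 ≤ s := by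
  rw [logRatio_of_critical ha hu hq hs hroot, sub_nonneg, ← log_le_log_iff (by positivity) hs]
  exact sinh_sub_id_strictMono.le_iff_le

end LogRatio

structure IsNShaped (f : ℝ → ℝ) (D m M : ℝ) : Prop where
  pos : 0 < m
  le : m ≤ M
  lt : M < D
  strictMonoOn_left : StrictMonoOn f (Ioc 0 m)
  strictAntiOn : StrictAntiOn f (Icc m M)
  strictMonoOn_right : StrictMonoOn f (Ico M D)

section Shape

variable {a D : ℝ}

theorem logRatio_strictMonoOn_of_sq_le_two (hD : 0 < D) (hD2 : D ^ 2 ≤ 2) :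
    StrictMonoOn (logRatio a D) (Ioo 0 D) := by
  have hleft : StrictMonoOn (logRatio a D) (Ioc 0 (D / 2)) :=
    logRatio_strictMonoOn (convex_Ioc _ _) (Ioc_subset_Ioo_right (by linarith)) fun u hu => by
      rw [interior_Ioc] at hu
      nlinarith [hu.2]
  have hright : StrictMonoOn (logRatio a D) (Ico (D / 2) D) :=
    logRatio_strictMonoOn (convex_Ico _ _) (Ico_subset_Ioo_left (by linarith)) fun u hu => by
      rw [interior_Ico] at hu
      nlinarith [hu.1]
  simpa [Ioc_union_Ico_eq_Ioo (by linarith : 0 < D / 2) (by linarith : D / 2 < D)] using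
    hleft.union hright (isGreatest_Ioc (by linarith)) (isLeast_Ico (by linarith))

theorem isNShaped_logRatio_of_sq_le_two (hD : 0 < D) (hD2 : D ^ 2 ≤ 2) {p : ℝ}
    (hp : p ∈ Ioo 0 D) : IsNShaped (logRatio a D) D p p where
  pos := hp.1
  le := le_rfl
  lt := hp.2
  strictMonoOn_left := (logRatio_strictMonoOn_of_sq_le_two hD hD2).mono (Ioc_subset_Ioo_right hp.2)
  strictAntiOn := by simp [Icc_self]
  strictMonoOn_right := (logRatio_strictMonoOn_of_sq_le_two hD hD2).mono (Ico_subset_Ioo_left hp.1)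

theorem exists_isNShaped_logRatio (hD : 0 < D) (hD2 : 2 < D ^ 2) :
    ∃ m M, m < M ∧ (∀ u, 2 * u ^ 2 - 2 * D * u + 1 = 2 * (u - m) * (u - M)) ∧
      IsNShaped (logRatio a D) D m M := by
  set δ := sqrt (D ^ 2 - 2)
  have hδ : 0 < δ := sqrt_pos.mpr (by linarith)
  have hδ2 : δ ^ 2 = D ^ 2 - 2 := sq_sqrt (by linarith)
  have hδD : δ < D := by nlinarith
  have hq : ∀ u, 2 * u ^ 2 - 2 * D * u + 1 = 2 * (u - (D - δ) / 2) * (u - (D + δ) / 2) := by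
    intro u; linear_combination (1 / 2 : ℝ) * hδ2
  refine ⟨(D - δ) / 2, (D + δ) / 2, by linarith, hq, by linarith, by linarith, by linarith,
    ?_, ?_, ?_⟩
  · refine logRatio_strictMonoOn (convex_Ioc _ _) (Ioc_subset_Ioo_right (by linarith))
      fun u hu => ?_
    rw [interior_Ioc] at hu
    rw [hq]; nlinarith [hu.2]
  · refine logRatio_strictAntiOn (convex_Icc _ _) (Icc_subset_Ioo (by linarith) (by linarith))
      fun u hu => ?_
    rw [interior_Icc] at hu
    rw [hq]; nlinarith [hu.1, hu.2]
  · refine logRatio_strictMonoOn (convex_Ico _ _) (Ico_subset_Ioo_left (by linarith))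
      fun u hu => ?_
    rw [interior_Ico] at hu
    rw [hq]; nlinarith [hu.1]

end Shape

section Regimes

variable {a D m M : ℝ}

theorem ncard_localMax_gaussPair_eq_one_of_nonneg (ha : 0 < a) (hD : 0 < D)
    (hN : IsNShaped (logRatio a D) D m M) (hm : 0 < logRatio a D m)
    (hM : 0 ≤ logRatio a D M) : {u | IsLocalMax (gaussPair a D) u}.ncard = 1 := by
  obtain ⟨r, hr, hFr⟩ :=
    exists_logRatio_eq_zero_Ioo_zero hD ⟨hN.pos, hN.le.trans_lt hN.lt⟩ hm
  have hrM : r ≤ M := hr.2.le.trans hN.le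
  have hmono : StrictMonoOn (gaussPair a D) (Iic r) :=
    gaussPair_strictMonoOn_Iic ha hD (hrM.trans hN.lt.le) fun u hu =>
      (hN.strictMonoOn_left ⟨hu.1, (hu.2.trans hr.2).le⟩ ⟨hr.1, hr.2.le⟩ hu.2).trans_eq hFr
  have hanti₁ : StrictAntiOn (gaussPair a D) (Icc r M) :=
    gaussPair_strictAntiOn_Icc ha hr.1.le hN.lt.le fun u hu => by
      rcases le_or_gt u m with hum | hum
      · exact hFr.symm.trans_lt
          (hN.strictMonoOn_left ⟨hr.1, hr.2.le⟩ ⟨hr.1.trans hu.1, hum⟩ hu.1)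
      · exact hM.trans_lt (hN.strictAntiOn ⟨hum.le, hu.2.le⟩ ⟨hN.le, le_rfl⟩ hu.2)
  have hanti₂ : StrictAntiOn (gaussPair a D) (Ici M) :=
    gaussPair_strictAntiOn_Ici ha hD (hN.pos.le.trans hN.le) fun u hu =>
      hM.trans_lt (hN.strictMonoOn_right ⟨le_rfl, hN.lt⟩ ⟨hu.1.le, hu.2⟩ hu.1)
  have hanti := hanti₁.union hanti₂ (isGreatest_Icc hrM) isLeast_Ici
  rw [Icc_union_Ici_eq_Ici hrM] at hanti
  rw [setOf_isLocalMax_eq_singleton hmono hanti, ncard_singleton]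

theorem ncard_localMax_gaussPair_eq_one_of_nonpos (ha : 0 < a) (hD : 0 < D)
    (hN : IsNShaped (logRatio a D) D m M) (hm : logRatio a D m ≤ 0)
    (hM : logRatio a D M < 0) : {u | IsLocalMax (gaussPair a D) u}.ncard = 1 := by
  obtain ⟨r, hr, hFr⟩ :=
    exists_logRatio_eq_zero_Ioo_right hD ⟨hN.pos.trans_le hN.le, hN.lt⟩ hM
  have hmr : m ≤ r := hN.le.trans hr.1.le
  have hmono₁ : StrictMonoOn (gaussPair a D) (Iic m) :=
    gaussPair_strictMonoOn_Iic ha hD (hN.le.trans hN.lt.le) fun u hu =>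
      (hN.strictMonoOn_left ⟨hu.1, hu.2.le⟩ ⟨hN.pos, le_rfl⟩ hu.2).trans_le hm
  have hmono₂ : StrictMonoOn (gaussPair a D) (Icc m r) :=
    gaussPair_strictMonoOn_Icc ha hN.pos.le hr.2.le fun u hu => by
      rcases le_or_gt u M with huM | huM
      · exact (hN.strictAntiOn ⟨le_rfl, hN.le⟩ ⟨hu.1.le, huM⟩ hu.1).trans_le hm
      · exact (hN.strictMonoOn_right ⟨huM.le, hu.2.trans hr.2⟩ ⟨hr.1.le, hr.2⟩ hu.2).trans_eq hFr
  have hanti : StrictAntiOn (gaussPair a D) (Ici r) :=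
    gaussPair_strictAntiOn_Ici ha hD (hN.pos.le.trans hmr) fun u hu =>
      hFr.symm.trans_lt (hN.strictMonoOn_right ⟨hr.1.le, hr.2⟩ ⟨(hr.1.trans hu.1).le, hu.2⟩ hu.1)
  have hmono := hmono₁.union hmono₂ isGreatest_Iic (isLeast_Icc hmr)
  rw [Iic_union_Icc_eq_Iic hmr] at hmono
  rw [setOf_isLocalMax_eq_singleton hmono hanti, ncard_singleton]

theorem ncard_localMax_gaussPair_eq_two_of_pos_of_neg (ha : 0 < a) (hD : 0 < D)
    (hN : IsNShaped (logRatio a D) D m M) (hm : 0 < logRatio a D m)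
    (hM : logRatio a D M < 0) : {u | IsLocalMax (gaussPair a D) u}.ncard = 2 := by
  obtain ⟨r₁, hr₁, hFr₁⟩ :=
    exists_logRatio_eq_zero_Ioo_zero hD ⟨hN.pos, hN.le.trans_lt hN.lt⟩ hm
  obtain ⟨r₂, hr₂, hFr₂⟩ :=
    exists_logRatio_eq_zero hN.pos hN.le hN.lt (mul_neg_of_pos_of_neg hm hM)
  obtain ⟨r₃, hr₃, hFr₃⟩ :=
    exists_logRatio_eq_zero_Ioo_right hD ⟨hN.pos.trans_le hN.le, hN.lt⟩ hM
  have hmono₁ : StrictMonoOn (gaussPair a D) (Iic r₁) :=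
    gaussPair_strictMonoOn_Iic ha hD (hr₁.2.trans hr₂.1 |>.trans hr₂.2 |>.trans hN.lt).le
      fun u hu =>
        (hN.strictMonoOn_left ⟨hu.1, (hu.2.trans hr₁.2).le⟩ ⟨hr₁.1, hr₁.2.le⟩ hu.2).trans_eq hFr₁
  have hanti₁ : StrictAntiOn (gaussPair a D) (Icc r₁ r₂) :=
    gaussPair_strictAntiOn_Icc ha hr₁.1.le (hr₂.2.trans hN.lt).le fun u hu => by
      rcases le_or_gt u m with hum | hum
      · exact hFr₁.symm.trans_lt
          (hN.strictMonoOn_left ⟨hr₁.1, hr₁.2.le⟩ ⟨hr₁.1.trans hu.1, hum⟩ hu.1)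
      · exact hFr₂.symm.trans_lt
          (hN.strictAntiOn ⟨hum.le, (hu.2.trans hr₂.2).le⟩ ⟨hr₂.1.le, hr₂.2.le⟩ hu.2)
  have hmono₂ : StrictMonoOn (gaussPair a D) (Icc r₂ r₃) :=
    gaussPair_strictMonoOn_Icc ha (hN.pos.trans hr₂.1).le hr₃.2.le fun u hu => by
      rcases le_or_gt u M with huM | huM
      · exact (hN.strictAntiOn ⟨hr₂.1.le, hr₂.2.le⟩ ⟨(hr₂.1.trans hu.1).le, huM⟩ hu.1).trans_eq
          hFr₂
      · exact (hN.strictMonoOn_right ⟨huM.le, hu.2.trans hr₃.2⟩ ⟨hr₃.1.le, hr₃.2⟩ hu.2).trans_eq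
          hFr₃
  have hanti₂ : StrictAntiOn (gaussPair a D) (Ici r₃) :=
    gaussPair_strictAntiOn_Ici ha hD (hN.pos.trans_le hN.le |>.trans hr₃.1).le fun u hu =>
      hFr₃.symm.trans_lt
        (hN.strictMonoOn_right ⟨hr₃.1.le, hr₃.2⟩ ⟨(hr₃.1.trans hu.1).le, hu.2⟩ hu.1)
  have h₁₂ : r₁ < r₂ := hr₁.2.trans hr₂.1
  have h₂₃ : r₂ < r₃ := hr₂.2.trans hr₃.1
  rw [setOf_isLocalMax_eq_pair h₁₂ h₂₃ hmono₁ hanti₁ hmono₂ hanti₂,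
    ncard_pair (h₁₂.trans h₂₃).ne]

end Regimes

section Threshold

variable {a D s : ℝ}

theorem exists_sqrt_two_mul_eq (hs : 0 < s) : ∃ w, 0 < w ∧ 2 * w ^ 2 = s ∧ sqrt (2 * s) = 2 * w :=
  ⟨sqrt (2 * s) / 2, by positivity, by rw [div_pow, sq_sqrt (by positivity)]; ring, by ring⟩

theorem ncard_localMax_gaussPair_eq_one (ha : 0 < a) (hD : 0 < D) (hs : 0 < s)
    (hroot : log (s / a) = 1 / 2 * (s - 1 / s)) (hle : D * sqrt (2 * s) ≤ 1 + s) :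
    {u | IsLocalMax (gaussPair a D) u}.ncard = 1 := by
  rcases le_or_gt (D ^ 2) 2 with hD2 | hD2
  · -- `logRatio a D` is increasing on `(0, D)`: a degenerate shape with `m = M` will do.
    obtain ⟨p, hp, hFp⟩ := exists_logRatio_pos (a := a) hD hD
    exact ncard_localMax_gaussPair_eq_one_of_nonneg ha hD
      (isNShaped_logRatio_of_sq_le_two hD hD2 hp) hFp hFp.le
  obtain ⟨m, M, hmM, hq, hN⟩ := exists_isNShaped_logRatio (a := a) hD hD2
  have hqm : 2 * m ^ 2 - 2 * D * m + 1 = 0 := by rw [hq]; ring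
  have hqM : 2 * M ^ 2 - 2 * D * M + 1 = 0 := by rw [hq]; ring
  have hMm : logRatio a D M < logRatio a D m :=
    hN.strictAntiOn ⟨le_rfl, hN.le⟩ ⟨hN.le, le_rfl⟩ hmM
  obtain ⟨w, hw₀, hw, hsqrt⟩ := exists_sqrt_two_mul_eq hs
  rw [hsqrt] at hle
  have hqw : 0 ≤ (w - m) * (w - M) := by nlinarith [hq w]
  rcases le_or_gt w m with hwm | hwm
  · have hFm : logRatio a D m ≤ 0 := by
      rw [← not_lt, logRatio_pos_iff_of_critical ha hN.pos hqm hs hroot]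
      nlinarith [hN.pos]
    exact ncard_localMax_gaussPair_eq_one_of_nonpos ha hD hN hFm (hMm.trans_le hFm)
  · have hMw : M ≤ w := by nlinarith
    have hFM : 0 ≤ logRatio a D M := by
      rw [logRatio_nonneg_iff_of_critical ha (hN.pos.trans hmM) hqM hs hroot]
      nlinarith [hN.pos]
    exact ncard_localMax_gaussPair_eq_one_of_nonneg ha hD hN (hFM.trans_lt hMm) hFM

theorem ncard_localMax_gaussPair_eq_two (ha : 0 < a) (hD : 0 < D) (hs : 0 < s)
    (hroot : log (s / a) = 1 / 2 * (s - 1 / s)) (hlt : 1 + s < D * sqrt (2 * s)) :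
    {u | IsLocalMax (gaussPair a D) u}.ncard = 2 := by
  obtain ⟨w, hw₀, hw, hsqrt⟩ := exists_sqrt_two_mul_eq hs
  rw [hsqrt] at hlt
  have hD2 : 2 < D ^ 2 := by nlinarith [sq_nonneg (2 * w - D)]
  obtain ⟨m, M, hmM, hq, hN⟩ := exists_isNShaped_logRatio (a := a) hD hD2
  have hqm : 2 * m ^ 2 - 2 * D * m + 1 = 0 := by rw [hq]; ring
  have hqM : 2 * M ^ 2 - 2 * D * M + 1 = 0 := by rw [hq]; ring
  have hqw : (w - m) * (w - M) < 0 := by nlinarith [hq w]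
  have hmw : m < w := by nlinarith
  have hwM : w < M := by nlinarith
  have hFm : 0 < logRatio a D m := by
    rw [logRatio_pos_iff_of_critical ha hN.pos hqm hs hroot]
    nlinarith [hN.pos]
  have hFM : logRatio a D M < 0 := by
    rw [← not_le, logRatio_nonneg_iff_of_critical ha (hN.pos.trans hmM) hqM hs hroot]
    nlinarith [hN.pos]
  exact ncard_localMax_gaussPair_eq_two_of_pos_of_neg ha hD hN hFm hFM

end Threshold

theorem norm_Vst_eq_gSum {ξ₀ ξ₁ a : ℝ} (hξ : ξ₁ - ξ₀ ≠ 0) (ha : 0 ≤ a) (σ : ℝ) (k : ℤ)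
    (η : ℝ) : ‖Vst ξ₀ ξ₁ a σ ((k : ℝ) / (ξ₁ - ξ₀)) η‖ = gSum ξ₀ ξ₁ a σ η := by
  have hξ' : (ξ₁ : ℂ) - ξ₀ ≠ 0 := by exact_mod_cast hξ
  have hphase : Complex.exp (2 * π * Complex.I * (ξ₁ - ξ₀) * ((k / (ξ₁ - ξ₀) : ℝ) : ℂ)) = 1 := by
    rw [← Complex.exp_int_mul_two_pi_mul_I k]
    congr 1
    push_cast
    field_simp
  have hunit (t : ℝ) : ‖Complex.exp (2 * π * Complex.I * ξ₀ * t)‖ = 1 := by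
    rw [Complex.norm_exp]
    simp
  rw [Vst, hphase, mul_one, norm_mul, hunit, one_mul, gSum, ← Complex.ofReal_mul,
    ← Complex.ofReal_add, Complex.norm_real, Real.norm_of_nonneg (by positivity)]

theorem ncard_setOf_isLocalMax_gSum (ξ₀ ξ₁ a : ℝ) {σ : ℝ} (hσ : 0 < σ) :
    {η | IsLocalMax (gSum ξ₀ ξ₁ a σ) η}.ncard =
      {u | IsLocalMax (gaussPair a (π * σ * (ξ₁ - ξ₀))) u}.ncard := by
  let e : ℝ ≃ₜ ℝ :=
    (Homeomorph.subRight ξ₀).trans (Homeomorph.mulLeft₀ (π * σ) (mul_pos pi_pos hσ).ne')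
  have hg : gSum ξ₀ ξ₁ a σ = gaussPair a (π * σ * (ξ₁ - ξ₀)) ∘ e := by
    ext η
    have he : e η = π * σ * (η - ξ₀) := rfl
    simp only [gSum, gaussPair, Function.comp_apply, he]
    ring_nf
  rw [hg, e.ncard_setOf_isLocalMax_comp]

/-- there is a unique `s > 0` with `ln(s/a) = (1/2)(s − 1/s)`; setting
`Δ_c = (1+s)/(πσ√(2s))`, the function `g(η) = e^{−π²σ²(η−ξ₀)²} + a e^{−π²σ²(η−ξ₁)²}`
(which equals `|V(t_k⁺,η)|` at every constructive time `t_k⁺ = k/Δ`) has exactly one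
local-maximum point when `Δ ≤ Δ_c` and exactly two when `Δ > Δ_c`. -/
theorem stmt1 (ξ₀ ξ₁ a σ : ℝ) (hξ : ξ₀ < ξ₁) (ha : 0 < a) (hσ : 0 < σ) :
    (∃! s : ℝ, 0 < s ∧ Real.log (s / a) = (1 / 2) * (s - 1 / s)) ∧
    (∀ k : ℤ, ∀ η : ℝ, ‖Vst ξ₀ ξ₁ a σ ((k : ℝ) / (ξ₁ - ξ₀)) η‖ = gSum ξ₀ ξ₁ a σ η) ∧
    ∀ s : ℝ, 0 < s → Real.log (s / a) = (1 / 2) * (s - 1 / s) →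
      ((ξ₁ - ξ₀ ≤ (1 + s) / (Real.pi * σ * Real.sqrt (2 * s)) →
          ∃! η : ℝ, IsLocalMax (gSum ξ₀ ξ₁ a σ) η) ∧
       ((1 + s) / (Real.pi * σ * Real.sqrt (2 * s)) < ξ₁ - ξ₀ →
          ∃ η₁ η₂ : ℝ, η₁ ≠ η₂ ∧ IsLocalMax (gSum ξ₀ ξ₁ a σ) η₁ ∧
            IsLocalMax (gSum ξ₀ ξ₁ a σ) η₂ ∧
            ∀ η : ℝ, IsLocalMax (gSum ξ₀ ξ₁ a σ) η → η = η₁ ∨ η = η₂)) := by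
  have hD : 0 < π * σ * (ξ₁ - ξ₀) := mul_pos (mul_pos pi_pos hσ) (sub_pos.mpr hξ)
  refine ⟨existsUnique_log_div_eq ha, norm_Vst_eq_gSum (sub_pos.mpr hξ).ne' ha.le σ,
    fun s hs hroot => ⟨fun hle => ?_, fun hlt => ?_⟩⟩
  · rw [le_div_iff₀ (by positivity)] at hle
    obtain ⟨η₀, h⟩ := Set.ncard_eq_one.mp <|
      (ncard_setOf_isLocalMax_gSum ξ₀ ξ₁ a hσ).trans <|
        ncard_localMax_gaussPair_eq_one ha hD hs hroot (by linarith)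
    exact ⟨η₀, Set.eq_singleton_iff_unique_mem.mp h⟩
  · rw [div_lt_iff₀ (by positivity)] at hlt
    obtain ⟨η₁, η₂, hne, h⟩ := Set.ncard_eq_two.mp <|
      (ncard_setOf_isLocalMax_gSum ξ₀ ξ₁ a hσ).trans <|
        ncard_localMax_gaussPair_eq_two ha hD hs hroot (by linarith)
    have hmem := Set.ext_iff.mp h
    exact ⟨η₁, η₂, hne, (hmem η₁).mpr (by simp), (hmem η₂).mpr (by simp),
      fun η hη => (hmem η).mp hη⟩
end
end

section
/- Let s be the unique positive solution of ln(s/a) = (1/2)(s − 1/s) and set Δ_c = (1+s)/(πσ√(2s)). If Δ > Δ_c, then for every t ∈ ℝ the function η ↦ |V(t,η)| has exactly two local-maximum points and exactly one local-minimum point on ℝ. -/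
/-!
Put `β = π²σ²Δ²`, `c = cos (2πΔt)` and `x = 2π²σ²Δ (η - ξ̄)`. Up to a positive constant,
`|V|² = e^{-x²/(2β)} (e^{-x} + a² e^x + 2ac)`, whose `x`-derivative has the sign of
`S(x) = a² (β - x) e^x - (β + x) e^{-x} - 2acx`, that is, of
`β sinh (x + log a) - x (cosh (x + log a) + c)`. So it suffices that `S` changes sign `+ - + -`,
exactly three times.

At most three zeros: with `v = x + log a`, a zero of `S` solves
`β sinh v / (cosh v + c) - v = -log a` (or is `v = 0` when `c = -1`), and the left side is strictly
monotone on each of three intervals covering `ℝ`, its derivative having the sign of the concave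
quadratic `β (1 + c y) - (y + c)²` at `y = cosh v ≥ 1`.

At least three sign changes: `S > 0` far left and `S < 0` far right. As `S` is affine in `c`, it is
negative at some `x < -log a` once it is so for `c = ±1`; for `c = -1` this is elementary, and for
`c = 1`, where `|V|` is a sum of two Gaussians, it is exactly what `Δ > Δ_c` provides. The symmetry
`S_{1/a}(-x) = -S_a(x) / a²`, which preserves the equation defining `s`, then gives a positive value
at some `x > -log a`.
-/

noncomputable section

open MeasureTheory

open Real Set Filter Topology

section LocalExtr

variable {α β : Type*} [TopologicalSpace α] [LinearOrder α] [OrderTopology α] [DenselyOrdered α]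
  [Preorder β] {f : α → β} {a b x : α}

theorem not_isLocalMax_of_strictMonoOn_Ico (hxb : x < b) (hf : StrictMonoOn f (Ico x b)) :
    ¬IsLocalMax f x := fun hmax ↦
  have := nhdsGT_neBot_of_exists_gt ⟨b, hxb⟩
  let ⟨_, hy, hle⟩ :=
    (Eventually.and (Ioo_mem_nhdsGT hxb) (hmax.filter_mono nhdsWithin_le_nhds)).exists
  (hf ⟨le_rfl, hxb⟩ (Ioo_subset_Ico_self hy) hy.1).not_ge hle

theorem not_isLocalMax_of_strictAntiOn_Ioc (hax : a < x) (hf : StrictAntiOn f (Ioc a x)) :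
    ¬IsLocalMax f x := fun hmax ↦
  have := nhdsLT_neBot_of_exists_lt ⟨a, hax⟩
  let ⟨_, hy, hle⟩ :=
    (Eventually.and (Ioo_mem_nhdsLT hax) (hmax.filter_mono nhdsWithin_le_nhds)).exists
  (hf (Ioo_subset_Ioc_self hy) ⟨hax, le_rfl⟩ hy.2).not_ge hle

theorem not_isLocalMin_of_strictAntiOn_Ico (hxb : x < b) (hf : StrictAntiOn f (Ico x b)) :
    ¬IsLocalMin f x :=
  not_isLocalMax_of_strictMonoOn_Ico (β := βᵒᵈ) hxb hf

theorem not_isLocalMin_of_strictMonoOn_Ioc (hax : a < x) (hf : StrictMonoOn f (Ioc a x)) :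
    ¬IsLocalMin f x :=
  not_isLocalMax_of_strictAntiOn_Ioc (β := βᵒᵈ) hax hf

variable [NoMinOrder α] [NoMaxOrder α]

theorem isLocalMax_iff_and_isLocalMin_iff_of_strictMonoOn_antiOn_monoOn_antiOn
    {w₁ w₂ w₃ : α} (h₁₂ : w₁ < w₂) (h₂₃ : w₂ < w₃)
    (h₀ : StrictMonoOn f (Iic w₁)) (h₁ : StrictAntiOn f (Icc w₁ w₂))
    (h₂ : StrictMonoOn f (Icc w₂ w₃)) (h₃ : StrictAntiOn f (Ici w₃)) (x : α) :
    (IsLocalMax f x ↔ x = w₁ ∨ x = w₃) ∧ (IsLocalMin f x ↔ x = w₂) := by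
  refine ⟨⟨fun hx ↦ ?_, ?_⟩, ⟨fun hx ↦ ?_, ?_⟩⟩
  · by_contra! hne
    rcases lt_or_gt_of_ne hne.1 with hx₁ | hx₁
    · exact not_isLocalMax_of_strictMonoOn_Ico hx₁ (h₀.mono fun y hy ↦ hy.2.le) hx
    rcases le_or_gt x w₂ with hx₂ | hx₂
    · exact not_isLocalMax_of_strictAntiOn_Ioc hx₁
        (h₁.mono fun y hy ↦ ⟨hy.1.le, hy.2.trans hx₂⟩) hx
    rcases lt_or_gt_of_ne hne.2 with hx₃ | hx₃
    · exact not_isLocalMax_of_strictMonoOn_Ico hx₃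
        (h₂.mono fun y hy ↦ ⟨hx₂.le.trans hy.1, hy.2.le⟩) hx
    · exact not_isLocalMax_of_strictAntiOn_Ioc hx₃ (h₃.mono fun y hy ↦ hy.1.le) hx
  · rintro (rfl | rfl)
    · exact isLocalMax_of_mono_anti' self_mem_nhdsWithin (Icc_mem_nhdsGE h₁₂)
        h₀.monotoneOn h₁.antitoneOn
    · exact isLocalMax_of_mono_anti' (Icc_mem_nhdsLE h₂₃) self_mem_nhdsWithin
        h₂.monotoneOn h₃.antitoneOn
  · by_contra hne
    rcases lt_or_gt_of_ne hne with hx₂ | hx₂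
    · rcases le_or_gt x w₁ with hx₁ | hx₁
      · obtain ⟨a, ha⟩ := exists_lt x
        exact not_isLocalMin_of_strictMonoOn_Ioc ha (h₀.mono fun y hy ↦ hy.2.trans hx₁) hx
      · exact not_isLocalMin_of_strictAntiOn_Ico hx₂
          (h₁.mono fun y hy ↦ ⟨hx₁.le.trans hy.1, hy.2.le⟩) hx
    · rcases le_or_gt x w₃ with hx₃ | hx₃
      · exact not_isLocalMin_of_strictMonoOn_Ioc hx₂
          (h₂.mono fun y hy ↦ ⟨hy.1.le, hy.2.trans hx₃⟩) hx
      · obtain ⟨b, hb⟩ := exists_gt x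
        exact not_isLocalMin_of_strictAntiOn_Ico hb (h₃.mono fun y hy ↦ hx₃.le.trans hy.1) hx
  · rintro rfl
    exact isLocalMin_of_anti_mono' (Icc_mem_nhdsLE h₁₂) (Icc_mem_nhdsGE h₂₃)
      h₁.antitoneOn h₂.monotoneOn

end LocalExtr

section RealValued

variable {X : Type*} [TopologicalSpace X] {f : X → ℝ}

theorem isLocalMax_sq_iff (hf : ∀ x, 0 ≤ f x) {x : X} :
    IsLocalMax (fun y ↦ f y ^ 2) x ↔ IsLocalMax f x := by
  simp only [IsLocalMax, IsMaxFilter, pow_le_pow_iff_left₀ (hf _) (hf _) two_ne_zero]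

theorem isLocalMin_sq_iff (hf : ∀ x, 0 ≤ f x) {x : X} :
    IsLocalMin (fun y ↦ f y ^ 2) x ↔ IsLocalMin f x := by
  simp only [IsLocalMin, IsMinFilter, pow_le_pow_iff_left₀ (hf _) (hf _) two_ne_zero]

theorem IsPreconnected.pos_of_pos {s : Set X} (hs : IsPreconnected s) (hf : ContinuousOn f s)
    (h₀ : ∀ x ∈ s, f x ≠ 0) {y : X} (hy : y ∈ s) (hfy : 0 < f y) {x : X} (hx : x ∈ s) :
    0 < f x := by
  by_contra! hfx
  obtain ⟨z, hz, hfz⟩ := hs.intermediate_value hx hy hf ⟨hfx, hfy.le⟩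
  exact h₀ z hz hfz

theorem IsPreconnected.neg_of_neg {s : Set X} (hs : IsPreconnected s) (hf : ContinuousOn f s)
    (h₀ : ∀ x ∈ s, f x ≠ 0) {y : X} (hy : y ∈ s) (hfy : f y < 0) {x : X} (hx : x ∈ s) :
    f x < 0 :=
  neg_pos.1 <| hs.pos_of_pos (f := fun x ↦ -f x) hf.neg (fun x hx ↦ neg_ne_zero.2 (h₀ x hx)) hy
    (neg_pos.2 hfy) hx

end RealValued

structure IsPosNegPosNeg (f : ℝ → ℝ) (w₁ w₂ w₃ : ℝ) : Prop where
  lt₁₂ : w₁ < w₂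
  lt₂₃ : w₂ < w₃
  pos_of_lt : ∀ x < w₁, 0 < f x
  neg_of_mem : ∀ x ∈ Ioo w₁ w₂, f x < 0
  pos_of_mem : ∀ x ∈ Ioo w₂ w₃, 0 < f x
  neg_of_gt : ∀ x, w₃ < x → f x < 0

theorem isPosNegPosNeg_of_samples {f : ℝ → ℝ} (hf : Continuous f)
    (hzeros : {x | f x = 0}.encard ≤ 3) {y₀ y₁ y₂ y₃ : ℝ} (h₀₁ : y₀ < y₁) (h₁₂ : y₁ < y₂)
    (h₂₃ : y₂ < y₃) (hy₀ : 0 < f y₀) (hy₁ : f y₁ < 0) (hy₂ : 0 < f y₂) (hy₃ : f y₃ < 0) :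
    ∃ w₁ w₂ w₃, IsPosNegPosNeg f w₁ w₂ w₃ := by
  obtain ⟨w₁, hw₁, hfw₁⟩ := intermediate_value_Ioo' h₀₁.le hf.continuousOn ⟨hy₁, hy₀⟩
  obtain ⟨w₂, hw₂, hfw₂⟩ := intermediate_value_Ioo h₁₂.le hf.continuousOn ⟨hy₁, hy₂⟩
  obtain ⟨w₃, hw₃, hfw₃⟩ := intermediate_value_Ioo' h₂₃.le hf.continuousOn ⟨hy₃, hy₂⟩
  have hw₁₂ : w₁ < w₂ := hw₁.2.trans hw₂.1
  have hw₂₃ : w₂ < w₃ := hw₂.2.trans hw₃.1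
  have hzeros_eq : {w₁, w₂, w₃} = {x | f x = 0} :=
    (toFinite _).eq_of_subset_of_encard_le (by simp [insert_subset_iff, hfw₁, hfw₂, hfw₃])
      (hzeros.trans_eq (encard_eq_three.2 ⟨w₁, w₂, w₃, hw₁₂.ne, (hw₁₂.trans hw₂₃).ne, hw₂₃.ne,
        rfl⟩).symm)
  have hzero : ∀ x, f x = 0 → x ∈ ({w₁, w₂, w₃} : Set ℝ) := fun x hx ↦ hzeros_eq ▸ hx
  have hw₁₃ := hw₁₂.trans hw₂₃
  refine ⟨w₁, w₂, w₃, hw₁₂, hw₂₃, fun x hx ↦ ?_, fun x hx ↦ ?_, fun x hx ↦ ?_, fun x hx ↦ ?_⟩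
  · refine isPreconnected_Iio.pos_of_pos hf.continuousOn (fun x hx hfx ↦ ?_) hw₁.1 hy₀ hx
    rcases hzero x hfx with rfl | rfl | rfl <;> simp_all [lt_asymm]
  · refine isPreconnected_Ioo.neg_of_neg hf.continuousOn (fun x hx hfx ↦ ?_) ⟨hw₁.2, hw₂.1⟩ hy₁ hx
    rcases hzero x hfx with rfl | rfl | rfl <;> simp_all [lt_asymm]
  · refine isPreconnected_Ioo.pos_of_pos hf.continuousOn (fun x hx hfx ↦ ?_) ⟨hw₂.2, hw₃.1⟩ hy₂ hx
    rcases hzero x hfx with rfl | rfl | rfl <;> simp_all [lt_asymm]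
  · refine isPreconnected_Ioi.neg_of_neg hf.continuousOn (fun x hx hfx ↦ ?_) hw₃.2 hy₃ hx
    rcases hzero x hfx with rfl | rfl | rfl <;> simp_all [lt_asymm]

namespace IsPosNegPosNeg

variable {f : ℝ → ℝ} {w₁ w₂ w₃ : ℝ}

theorem mul_comp (h : IsPosNegPosNeg f w₁ w₂ w₃) {k : ℝ → ℝ} (hk : ∀ x, 0 < k x) {q : ℝ}
    (hq : 0 < q) (r : ℝ) :
    IsPosNegPosNeg (fun x ↦ k x * f (q * (x - r))) (r + w₁ / q) (r + w₂ / q) (r + w₃ / q) where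
  lt₁₂ := by gcongr; exact h.lt₁₂
  lt₂₃ := by gcongr; exact h.lt₂₃
  pos_of_lt x hx := mul_pos (hk x) <| h.pos_of_lt _ <| (lt_div_iff₀' hq).1 (by linarith)
  neg_of_mem x hx := mul_neg_of_pos_of_neg (hk x) <| h.neg_of_mem _
    ⟨(div_lt_iff₀' hq).1 (by linarith [hx.1]), (lt_div_iff₀' hq).1 (by linarith [hx.2])⟩
  pos_of_mem x hx := mul_pos (hk x) <| h.pos_of_mem _
    ⟨(div_lt_iff₀' hq).1 (by linarith [hx.1]), (lt_div_iff₀' hq).1 (by linarith [hx.2])⟩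
  neg_of_gt x hx := mul_neg_of_pos_of_neg (hk x) <| h.neg_of_gt _ <|
    (div_lt_iff₀' hq).1 (by linarith)

theorem isLocalMax_iff_and_isLocalMin_iff {F : ℝ → ℝ} (hF : ∀ x, HasDerivAt F (f x) x)
    (h : IsPosNegPosNeg f w₁ w₂ w₃) (x : ℝ) :
    (IsLocalMax F x ↔ x = w₁ ∨ x = w₃) ∧ (IsLocalMin F x ↔ x = w₂) := by
  have hcont : Continuous F := continuous_iff_continuousAt.2 fun x ↦ (hF x).continuousAt
  have hderiv : ∀ x, deriv F x = f x := fun x ↦ (hF x).deriv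
  refine isLocalMax_iff_and_isLocalMin_iff_of_strictMonoOn_antiOn_monoOn_antiOn h.lt₁₂ h.lt₂₃
    ?_ ?_ ?_ ?_ x
  · refine strictMonoOn_of_deriv_pos (convex_Iic _) hcont.continuousOn fun x hx ↦ ?_
    rw [hderiv]; exact h.pos_of_lt x (by simpa using hx)
  · refine strictAntiOn_of_deriv_neg (convex_Icc _ _) hcont.continuousOn fun x hx ↦ ?_
    rw [hderiv]; exact h.neg_of_mem x (by simpa using hx)
  · refine strictMonoOn_of_deriv_pos (convex_Icc _ _) hcont.continuousOn fun x hx ↦ ?_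
    rw [hderiv]; exact h.pos_of_mem x (by simpa using hx)
  · refine strictAntiOn_of_deriv_neg (convex_Ici _) hcont.continuousOn fun x hx ↦ ?_
    rw [hderiv]; exact h.neg_of_gt x (by simpa using hx)

end IsPosNegPosNeg

theorem encard_le_three_of_subset_union {α : Type*} {Z S₁ S₂ S₃ : Set α} (h : Z ⊆ S₁ ∪ S₂ ∪ S₃)
    (h₁ : (Z ∩ S₁).Subsingleton) (h₂ : (Z ∩ S₂).Subsingleton) (h₃ : (Z ∩ S₃).Subsingleton) :
    Z.encard ≤ 3 :=
  calc Z.encard = (Z ∩ S₁ ∪ Z ∩ S₂ ∪ Z ∩ S₃).encard := by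
        rw [← inter_union_distrib_left, ← inter_union_distrib_left, inter_eq_left.2 h]
    _ ≤ (Z ∩ S₁).encard + (Z ∩ S₂).encard + (Z ∩ S₃).encard :=
        (encard_union_le _ _).trans (add_le_add_left (encard_union_le _ _) _)
    _ ≤ 1 + 1 + 1 := by
        gcongr <;> exact encard_le_one_iff_subsingleton.2 ‹_›
    _ = 3 := by norm_num

section Hyperbolic

variable {β c : ℝ}

def sinhRatio (β c v : ℝ) : ℝ := β * sinh v / (cosh v + c) - v

theorem hasDerivAt_sinhRatio {v : ℝ} (hv : cosh v + c ≠ 0) :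
    HasDerivAt (sinhRatio β c)
      ((β * (1 + c * cosh v) - (cosh v + c) ^ 2) / (cosh v + c) ^ 2) v := by
  refine ((((hasDerivAt_sinh v).const_mul β).div ((hasDerivAt_cosh v).add_const c) hv).sub
    (hasDerivAt_id v)).congr_deriv ?_
  field_simp
  linear_combination β * cosh_sq_sub_sinh_sq v

theorem strictAntiOn_sinhRatio {S : Set ℝ} (hS : Convex ℝ S) (hne : ∀ v ∈ S, cosh v + c ≠ 0)
    (hneg : ∀ v ∈ interior S, β * (1 + c * cosh v) < (cosh v + c) ^ 2) :
    StrictAntiOn (sinhRatio β c) S :=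
  strictAntiOn_of_deriv_neg hS
    (fun v hv ↦ (hasDerivAt_sinhRatio (hne v hv)).continuousAt.continuousWithinAt) fun v hv ↦ by
      rw [(hasDerivAt_sinhRatio (hne v (interior_subset hv))).deriv]
      exact div_neg_of_neg_of_pos (by linarith [hneg v hv])
        (sq_pos_of_ne_zero (hne v (interior_subset hv)))

theorem strictMonoOn_sinhRatio {S : Set ℝ} (hS : Convex ℝ S) (hne : ∀ v ∈ S, cosh v + c ≠ 0)
    (hpos : ∀ v ∈ interior S, (cosh v + c) ^ 2 < β * (1 + c * cosh v)) :
    StrictMonoOn (sinhRatio β c) S :=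
  strictMonoOn_of_deriv_pos hS
    (fun v hv ↦ (hasDerivAt_sinhRatio (hne v hv)).continuousAt.continuousWithinAt) fun v hv ↦ by
      rw [(hasDerivAt_sinhRatio (hne v (interior_subset hv))).deriv]
      exact div_pos (by linarith [hpos v hv]) (sq_pos_of_ne_zero (hne v (interior_subset hv)))

/-- The quadratic `y ↦ β (1 + c y) - (y + c)²` is concave and positive at `y = 1`. -/
theorem exists_one_lt_sign_quadratic (hβ : 2 < β) (hc : -1 < c) (hc1 : c ≤ 1) :
    ∃ Y, 1 < Y ∧ ∀ y, 1 ≤ y →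
      ((y + c) ^ 2 < β * (1 + c * y) ↔ y < Y) ∧ (β * (1 + c * y) < (y + c) ^ 2 ↔ Y < y) := by
  set Q : ℝ → ℝ := fun y ↦ β * (1 + c * y) - (y + c) ^ 2
  have hQ₁ : 0 < Q 1 := by simp only [Q]; nlinarith
  have hQβ : Q (β + 3) < 0 := by
    simp only [Q]
    nlinarith [mul_le_mul_of_nonneg_left hc1 (by positivity : 0 ≤ β * (β + 3)),
      mul_self_le_mul_self (by linarith : (0 : ℝ) ≤ β + 2) (by linarith : β + 2 ≤ β + 3 + c)]
  obtain ⟨Y, hY, hQY⟩ := intermediate_value_Ioo' (by linarith : (1 : ℝ) ≤ β + 3)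
    (by fun_prop : Continuous Q).continuousOn ⟨hQβ, hQ₁⟩
  have hfactor : ∀ y, Q y = (Y - y) * (y + Y + (2 - β) * c) := fun y ↦ by
    simp only [Q] at hQY ⊢; linear_combination hQY
  have hfactor_pos : ∀ y, 1 ≤ y → 0 < y + Y + (2 - β) * c := fun y hy ↦ by
    have := hfactor 1 ▸ hQ₁
    nlinarith [hY.1]
  refine ⟨Y, hY.1, fun y hy ↦ ⟨?_, ?_⟩⟩ <;>
    constructor <;> intro h <;> nlinarith [hfactor y, hfactor_pos y hy]

variable {g : ℝ}

theorem subsingleton_sinh_zeros_inter {S : Set ℝ} (hS : InjOn (sinhRatio β c) S)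
    (hne : ∀ v ∈ S, cosh v + c ≠ 0) :
    ({v | β * sinh v - (v - g) * (cosh v + c) = 0} ∩ S).Subsingleton := by
  have hlevel : ∀ v ∈ {v | β * sinh v - (v - g) * (cosh v + c) = 0} ∩ S,
      sinhRatio β c v = -g := by
    rintro v ⟨hv : β * sinh v - (v - g) * (cosh v + c) = 0, hvS⟩
    rw [sinhRatio, div_sub' (hne v hvS), div_eq_iff (hne v hvS)]
    linear_combination hv
  exact fun u hu w hw ↦ hS hu.2 hw.2 ((hlevel u hu).trans (hlevel w hw).symm)

theorem encard_sinh_zeros_le_three_of_eq_neg_one (hβ : 0 ≤ β) (hc : c = -1) :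
    {v | β * sinh v - (v - g) * (cosh v + c) = 0}.encard ≤ 3 := by
  subst hc
  have hne : ∀ v ≠ 0, cosh v + -1 ≠ 0 := fun v hv ↦ by linarith [one_lt_cosh.2 hv]
  have hneg : ∀ v ≠ 0, β * (1 + -1 * cosh v) < (cosh v + -1) ^ 2 := fun v hv ↦ by
    nlinarith [one_lt_cosh.2 hv]
  refine encard_le_three_of_subset_union (S₁ := Iio 0) (S₂ := {0}) (S₃ := Ioi 0)
    (fun v _ ↦ ?_) ?_ (subsingleton_singleton.anti inter_subset_right) ?_
  · rcases lt_trichotomy v 0 with h | h | h <;> simp [h]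
  · refine subsingleton_sinh_zeros_inter (strictAntiOn_sinhRatio (convex_Iio 0)
      (fun v hv ↦ hne v hv.ne) fun v hv ↦ hneg v ?_).injOn fun v hv ↦ hne v hv.ne
    rw [interior_Iio] at hv; exact hv.ne
  · refine subsingleton_sinh_zeros_inter (strictAntiOn_sinhRatio (convex_Ioi 0)
      (fun v hv ↦ hne v hv.ne') fun v hv ↦ hneg v ?_).injOn fun v hv ↦ hne v hv.ne'
    rw [interior_Ioi] at hv; exact hv.ne'

theorem encard_sinh_zeros_le_three_of_neg_one_lt (hβ : 2 < β) (hc : -1 < c) (hc1 : c ≤ 1) :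
    {v | β * sinh v - (v - g) * (cosh v + c) = 0}.encard ≤ 3 := by
  obtain ⟨Y, hY, hQ⟩ := exists_one_lt_sign_quadratic hβ hc hc1
  set v₀ := arcosh Y
  have hv₀ : 0 < v₀ := arcosh_pos hY
  have hcosh : ∀ v, (cosh v < Y ↔ |v| < v₀) ∧ (Y < cosh v ↔ v₀ < |v|) := fun v ↦ by
    rw [← abs_of_pos hv₀, ← cosh_lt_cosh, ← cosh_lt_cosh, cosh_arcosh hY.le]
    exact ⟨.rfl, .rfl⟩
  have hne : ∀ v, cosh v + c ≠ 0 := fun v ↦ by linarith [one_le_cosh v]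
  have hneg : ∀ v, v₀ < |v| → β * (1 + c * cosh v) < (cosh v + c) ^ 2 := fun v hv ↦
    (hQ _ (one_le_cosh v)).2.2 ((hcosh v).2.2 hv)
  refine encard_le_three_of_subset_union (S₁ := Iic (-v₀)) (S₂ := Icc (-v₀) v₀) (S₃ := Ici v₀)
    (fun v _ ↦ ?_) ?_ ?_ ?_
  · rcases le_or_gt v (-v₀) with h | h
    · simp [h]
    rcases le_or_gt v v₀ with h' | h'
    · simp [h.le, h']
    · simp [h'.le]
  · refine subsingleton_sinh_zeros_inter (strictAntiOn_sinhRatio (convex_Iic _)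
      (fun v _ ↦ hne v) fun v hv ↦ hneg v ?_).injOn fun v _ ↦ hne v
    rw [interior_Iic, mem_Iio] at hv
    rw [abs_of_neg (by linarith)]; linarith
  · refine subsingleton_sinh_zeros_inter (strictMonoOn_sinhRatio (convex_Icc _ _)
      (fun v _ ↦ hne v) fun v hv ↦ ?_).injOn fun v _ ↦ hne v
    rw [interior_Icc] at hv
    exact (hQ _ (one_le_cosh v)).1.2 ((hcosh v).1.2 (abs_lt.2 hv))
  · refine subsingleton_sinh_zeros_inter (strictAntiOn_sinhRatio (convex_Ici _)
      (fun v _ ↦ hne v) fun v hv ↦ hneg v ?_).injOn fun v _ ↦ hne v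
    rw [interior_Ici, mem_Ioi] at hv
    rwa [abs_of_pos (by linarith)]

theorem encard_sinh_zeros_le_three (hβ : 2 < β) (hc : -1 ≤ c) (hc1 : c ≤ 1) :
    {v | β * sinh v - (v - g) * (cosh v + c) = 0}.encard ≤ 3 :=
  hc.eq_or_lt.elim (fun h ↦ encard_sinh_zeros_le_three_of_eq_neg_one (by linarith) h.symm)
    fun h ↦ encard_sinh_zeros_le_three_of_neg_one_lt hβ h hc1

end Hyperbolic

section Profile

variable {a c β s x : ℝ}

/-- With `β = π²σ²Δ²` and `c = cos (2πΔt)`,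
`‖V(t, ξ̄ + x / (2π²σ²Δ))‖² = e^{-β/2} normSqProfile a c β x`. -/
def normSqProfile (a c β x : ℝ) : ℝ :=
  exp (-(x ^ 2 / (2 * β))) * (exp (-x) + a ^ 2 * exp x + 2 * a * c)

def profileSlope (a c β x : ℝ) : ℝ :=
  a ^ 2 * (β - x) * exp x - (β + x) * exp (-x) - 2 * a * c * x

theorem hasDerivAt_normSqProfile (hβ : β ≠ 0) (x : ℝ) :
    HasDerivAt (normSqProfile a c β) (exp (-(x ^ 2 / (2 * β))) / β * profileSlope a c β x) x := by
  have hg : HasDerivAt (fun x ↦ -(x ^ 2 / (2 * β))) (-(x / β)) x :=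
    ((hasDerivAt_pow 2 x).div_const (2 * β)).neg.congr_deriv (by field_simp; ring)
  refine (hg.exp.mul (((hasDerivAt_neg x).exp.add ((hasDerivAt_exp x).const_mul _)).add_const
    _)).congr_deriv ?_
  simp only [profileSlope, Pi.add_apply]
  field_simp
  ring

theorem profileSlope_eq_sinh (ha : 0 < a) (x : ℝ) :
    profileSlope a c β x = 2 * a * (β * sinh (x + log a) - x * (cosh (x + log a) + c)) := by
  rw [profileSlope, sinh_eq, cosh_eq, exp_add, neg_add, exp_add, exp_log ha, exp_neg (log a),
    exp_log ha]
  field_simp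
  ring

theorem profileSlope_inv_neg (ha : a ≠ 0) (x : ℝ) :
    profileSlope a⁻¹ c β (-x) = -a⁻¹ ^ 2 * profileSlope a c β x := by
  simp only [profileSlope, neg_neg]
  field_simp
  ring

/-- `profileSlope` is affine in `c`; at `c = ±1` it factors, `|V|` being then the sum or the
difference of two real Gaussians. -/
theorem profileSlope_eq_mix (a c β x : ℝ) :
    profileSlope a c β x =
      -((1 + c) / 2 * ((1 + a * exp x) * ((x + β) * exp (-x) + a * (x - β))) +
        (1 - c) / 2 * ((1 - a * exp x) * ((x + β) * exp (-x) + a * (β - x)))) := by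
  have h : exp x * exp (-x) = 1 := by rw [← exp_add, add_neg_cancel, exp_zero]
  simp only [profileSlope]
  linear_combination (a * c * (x + β)) * h

theorem profileSlope_pos_of_le (ha : 0 < a) (hβ : 0 < β) (hc : -1 ≤ c)
    (hx : x ≤ -(β + 2 * a + 1)) : 0 < profileSlope a c β x := by
  have h₁ : 0 < a ^ 2 * (β - x) * exp x := by
    have : 0 < β - x := by linarith
    positivity
  have h₂ : -(β + x) * (1 - x) ≤ -(β + x) * exp (-x) :=
    mul_le_mul_of_nonneg_left (by linarith [add_one_le_exp (-x)]) (by linarith)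
  have h₃ : 2 * a * x ≤ -(2 * a * c * x) := by
    nlinarith [mul_nonneg (mul_nonneg ha.le (by linarith : 0 ≤ -x)) (by linarith : 0 ≤ c + 1)]
  simp only [profileSlope]
  nlinarith

theorem profileSlope_neg_of_ge (ha : 0 < a) (hβ : 0 < β) (hc : -1 ≤ c)
    (hx : β + 2 / a + 1 ≤ x) : profileSlope a c β x < 0 := by
  have := profileSlope_pos_of_le (x := -x) (inv_pos.2 ha) hβ hc
    (by rw [← div_eq_mul_inv]; linarith)
  rw [profileSlope_inv_neg ha.ne'] at this
  nlinarith [pow_pos (inv_pos.2 ha) 2]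

/-- The expression is `-profileSlope a 1 β x / (1 + a eˣ)`. For `s ≤ 1` the witness `s + 1 - β` is
a zero of it when `β = (1 + s)² / (2s)`; for `s > 1` one has `a < 1`, which makes `s⁻¹ + 1 - β`
work. -/
theorem exists_lt_neg_log_of_separated (ha : 0 < a) (hs : 0 < s)
    (hseq : log (s / a) = 1 / 2 * (s - 1 / s)) (hβ : (1 + s) ^ 2 / (2 * s) < β) :
    ∃ x, -β < x ∧ x < β ∧ x < -log a ∧ 0 < (x + β) * exp (-x) + a * (x - β) := by
  have hloga : log a = log s - (s - s⁻¹) / 2 := by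
    simp only [log_div hs.ne' ha.ne', one_div] at hseq; linarith
  set δ := β - (1 + s) ^ 2 / (2 * s)
  have hδ : 0 < δ := sub_pos.2 hβ
  have hβδ : β = (s + 2 + s⁻¹) / 2 + δ := by simp only [δ]; field_simp; ring
  have hexpδ : δ + 1 < exp δ := add_one_lt_exp hδ.ne'
  have hsinv : 0 < s⁻¹ := inv_pos.2 hs
  rcases le_or_gt s 1 with hs1 | hs1
  · have hlog : log s ≤ 0 := log_nonpos hs.le hs1
    have hinv : 1 ≤ s⁻¹ := (one_le_inv₀ hs).2 hs1
    have hexp : exp (-(s + 1 - β)) = a / s * exp δ := by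
      rw [show -(s + 1 - β) = log a - log s + δ by rw [hβδ, hloga]; ring, exp_add, exp_sub,
        exp_log ha, exp_log hs]
    refine ⟨s + 1 - β, by linarith, by linarith, by linarith, ?_⟩
    have hval : (s + 1 - β + β) * (a / s * exp δ) + a * (s + 1 - β - β) =
        a * ((1 + s⁻¹) * (exp δ - 1) - 2 * δ) := by
      rw [hβδ]; field_simp; ring
    rw [hexp, hval]
    exact mul_pos ha (by nlinarith)
  · have hlog : log s < (s - s⁻¹) / 2 := by
      simpa [sinh_log hs] using self_lt_sinh_iff.2 (log_pos hs1)
    have ha1 : a < 1 := (log_neg_iff ha).1 (by linarith)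
    have hinv : s⁻¹ < 1 := inv_lt_one_of_one_lt₀ hs1
    have hexp : exp (-(s⁻¹ + 1 - β)) = s / a * exp δ := by
      rw [show -(s⁻¹ + 1 - β) = log s - log a + δ by rw [hβδ, hloga]; ring, exp_add, exp_sub,
        exp_log ha, exp_log hs]
    refine ⟨s⁻¹ + 1 - β, by linarith, by linarith, by linarith [log_le_sub_one_of_pos hs], ?_⟩
    have hval : a * ((s⁻¹ + 1 - β + β) * (s / a * exp δ) + a * (s⁻¹ + 1 - β - β)) =
        (1 + s) * exp δ - a ^ 2 * (1 + s + 2 * δ) := by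
      rw [hβδ]; field_simp; ring
    rw [hexp, ← mul_pos_iff_of_pos_left ha, hval]
    nlinarith [mul_lt_mul_of_pos_right (by nlinarith : a ^ 2 < 1)
      (by linarith : 0 < 1 + s + 2 * δ)]

theorem exists_lt_neg_log_profileSlope_neg (ha : 0 < a) (hs : 0 < s)
    (hseq : log (s / a) = 1 / 2 * (s - 1 / s)) (hβ : (1 + s) ^ 2 / (2 * s) < β) (hc : -1 ≤ c)
    (hc1 : c ≤ 1) : ∃ x < -log a, profileSlope a c β x < 0 := by
  obtain ⟨x, hxβ, hxβ', hx, hpos⟩ := exists_lt_neg_log_of_separated ha hs hseq hβ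
  have hax : a * exp x < 1 := by
    rw [← lt_div_iff₀' ha, one_div, ← exp_log (inv_pos.2 ha), log_inv]
    exact exp_lt_exp.2 hx
  have hpos' : 0 < (x + β) * exp (-x) + a * (β - x) := by
    have : 0 < x + β := by linarith
    have : 0 < β - x := by linarith
    positivity
  refine ⟨x, hx, ?_⟩
  rw [profileSlope_eq_mix, neg_lt_zero]
  simpa using convex_Ioi (0 : ℝ) (mul_pos (by positivity) hpos) (mul_pos (by linarith) hpos')
    (by linarith : 0 ≤ (1 + c) / 2) (by linarith : 0 ≤ (1 - c) / 2) (by ring)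

theorem exists_neg_log_lt_profileSlope_pos (ha : 0 < a) (hs : 0 < s)
    (hseq : log (s / a) = 1 / 2 * (s - 1 / s)) (hβ : (1 + s) ^ 2 / (2 * s) < β) (hc : -1 ≤ c)
    (hc1 : c ≤ 1) : ∃ x, -log a < x ∧ 0 < profileSlope a c β x := by
  have hseq' : log (s⁻¹ / a⁻¹) = 1 / 2 * (s⁻¹ - 1 / s⁻¹) := by
    rw [inv_div_inv, ← inv_div, log_inv, hseq]; simp only [one_div, inv_inv]; ring
  have hβ' : (1 + s⁻¹) ^ 2 / (2 * s⁻¹) < β := by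
    convert hβ using 1; field_simp; ring
  obtain ⟨x, hx, hneg⟩ :=
    exists_lt_neg_log_profileSlope_neg (inv_pos.2 ha) (inv_pos.2 hs) hseq' hβ' hc hc1
  refine ⟨-x, by linarith [log_inv a], ?_⟩
  have := profileSlope_inv_neg (c := c) (β := β) (inv_ne_zero ha.ne') x
  rw [inv_inv] at this
  rw [this]
  nlinarith [pow_pos ha 2]

theorem encard_profileSlope_zeros_le_three (ha : 0 < a) (hβ : 2 < β) (hc : -1 ≤ c)
    (hc1 : c ≤ 1) : {x | profileSlope a c β x = 0}.encard ≤ 3 := by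
  have hsub : {x | profileSlope a c β x = 0} ⊆
      (· - log a) '' {v | β * sinh v - (v - log a) * (cosh v + c) = 0} := by
    intro x (hx : profileSlope a c β x = 0)
    refine ⟨x + log a, ?_, add_sub_cancel_right x (log a)⟩
    rw [profileSlope_eq_sinh ha] at hx
    simpa [ha.ne'] using hx
  exact (encard_le_encard hsub).trans
    ((encard_image_le _ _).trans (encard_sinh_zeros_le_three hβ hc hc1))

theorem exists_isPosNegPosNeg_profileSlope (ha : 0 < a) (hs : 0 < s)
    (hseq : log (s / a) = 1 / 2 * (s - 1 / s)) (hβ : (1 + s) ^ 2 / (2 * s) < β) (hc : -1 ≤ c)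
    (hc1 : c ≤ 1) : ∃ w₁ w₂ w₃, IsPosNegPosNeg (profileSlope a c β) w₁ w₂ w₃ := by
  have hβ₂ : 2 < β := by
    refine lt_of_le_of_lt ?_ hβ
    rw [le_div_iff₀ (by positivity)]
    nlinarith [sq_nonneg (1 - s)]
  obtain ⟨x₁, hx₁, hneg⟩ := exists_lt_neg_log_profileSlope_neg ha hs hseq hβ hc hc1
  obtain ⟨x₂, hx₂, hpos⟩ := exists_neg_log_lt_profileSlope_pos ha hs hseq hβ hc hc1
  refine isPosNegPosNeg_of_samples (by unfold profileSlope; fun_prop)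
    (encard_profileSlope_zeros_le_three ha hβ₂ hc hc1)
    (y₀ := min x₁ (-(β + 2 * a + 1)) - 1) (y₃ := max x₂ (β + 2 / a + 1) + 1) ?_
    (hx₁.trans hx₂) ?_ (profileSlope_pos_of_le ha (by linarith) hc ?_) hneg hpos
    (profileSlope_neg_of_ge ha (by linarith) hc ?_)
  · linarith [min_le_left x₁ (-(β + 2 * a + 1))]
  · linarith [le_max_left x₂ (β + 2 / a + 1)]
  · linarith [min_le_right x₁ (-(β + 2 * a + 1))]
  · linarith [le_max_right x₂ (β + 2 / a + 1)]

end Profile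

theorem norm_ofReal_add_mul_exp_mul_I_sq (u v a θ : ℝ) :
    ‖(u : ℂ) + a * Complex.exp (θ * Complex.I) * v‖ ^ 2 =
      u ^ 2 + a ^ 2 * v ^ 2 + 2 * a * cos θ * (u * v) := by
  rw [Complex.sq_norm, Complex.normSq_apply]
  simp [Complex.exp_ofReal_mul_I_re, Complex.exp_ofReal_mul_I_im]
  linear_combination (a ^ 2 * v ^ 2) * sin_sq_add_cos_sq θ

section STFT

variable {ξ₀ ξ₁ σ : ℝ}

theorem norm_Vst_sq (hξ : ξ₀ ≠ ξ₁) (hσ : σ ≠ 0) (a t η : ℝ) :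
    ‖Vst ξ₀ ξ₁ a σ t η‖ ^ 2 = exp (-(π ^ 2 * σ ^ 2 * (ξ₁ - ξ₀) ^ 2 / 2)) *
      normSqProfile a (cos (2 * π * (ξ₁ - ξ₀) * t)) (π ^ 2 * σ ^ 2 * (ξ₁ - ξ₀) ^ 2)
        (2 * π ^ 2 * σ ^ 2 * (ξ₁ - ξ₀) * (η - (ξ₀ + ξ₁) / 2)) := by
  have hphase : ∀ θ : ℝ, 2 * π * Complex.I * θ * t = (2 * π * θ * t : ℝ) * Complex.I :=
    fun θ ↦ by push_cast; ring
  rw [Vst, norm_mul, mul_pow, hphase, Complex.norm_exp_ofReal_mul_I, one_pow, one_mul,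
    ← Complex.ofReal_sub, hphase, norm_ofReal_add_mul_exp_mul_I_sq, normSqProfile]
  have hΔ : ξ₁ - ξ₀ ≠ 0 := sub_ne_zero.2 hξ.symm
  set x := 2 * π ^ 2 * σ ^ 2 * (ξ₁ - ξ₀) * (η - (ξ₀ + ξ₁) / 2)
  set γ := -(π ^ 2 * σ ^ 2 * (ξ₁ - ξ₀) ^ 2 / 2) + -(x ^ 2 / (2 * (π ^ 2 * σ ^ 2 * (ξ₁ - ξ₀) ^ 2)))
  have h₀ : 2 * -(π ^ 2 * σ ^ 2 * (η - ξ₀) ^ 2) = γ + -x := by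
    simp only [γ, x]; field_simp; ring
  have h₁ : 2 * -(π ^ 2 * σ ^ 2 * (η - ξ₁) ^ 2) = γ + x := by
    simp only [γ, x]; field_simp; ring
  have h₂ : -(π ^ 2 * σ ^ 2 * (η - ξ₀) ^ 2) + -(π ^ 2 * σ ^ 2 * (η - ξ₁) ^ 2) = γ := by
    simp only [γ, x]; field_simp; ring
  rw [← exp_nat_mul, ← exp_nat_mul, ← exp_add, Nat.cast_ofNat, h₀, h₁, h₂]
  simp only [γ, exp_add]
  ring

theorem sq_one_add_div_lt_of_div_sqrt_lt {s : ℝ} (hs : 0 < s) (hσ : 0 < σ)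
    (hΔ : (1 + s) / (π * σ * √(2 * s)) < ξ₁ - ξ₀) :
    (1 + s) ^ 2 / (2 * s) < π ^ 2 * σ ^ 2 * (ξ₁ - ξ₀) ^ 2 := by
  have h := pow_lt_pow_left₀ hΔ (by positivity) two_ne_zero
  rw [div_pow, mul_pow, mul_pow, sq_sqrt (by positivity), div_lt_iff₀ (by positivity)] at h
  rw [div_lt_iff₀ (by positivity)]
  linarith

theorem exists_isPosNegPosNeg_deriv_norm_Vst_sq {a s : ℝ} (hξ : ξ₀ < ξ₁) (ha : 0 < a)
    (hσ : σ ≠ 0) (hs : 0 < s) (hseq : log (s / a) = 1 / 2 * (s - 1 / s))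
    (hβ : (1 + s) ^ 2 / (2 * s) < π ^ 2 * σ ^ 2 * (ξ₁ - ξ₀) ^ 2) (t : ℝ) :
    ∃ F' : ℝ → ℝ, (∀ η, HasDerivAt (fun η ↦ ‖Vst ξ₀ ξ₁ a σ t η‖ ^ 2) (F' η) η) ∧
      ∃ w₁ w₂ w₃, IsPosNegPosNeg F' w₁ w₂ w₃ := by
  set β := π ^ 2 * σ ^ 2 * (ξ₁ - ξ₀) ^ 2
  set q := 2 * π ^ 2 * σ ^ 2 * (ξ₁ - ξ₀)
  set m := (ξ₀ + ξ₁) / 2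
  have hΔ : 0 < ξ₁ - ξ₀ := sub_pos.2 hξ
  have hβ₀ : 0 < β := by positivity
  have hq : 0 < q := by positivity
  obtain ⟨w₁, w₂, w₃, hw⟩ := exists_isPosNegPosNeg_profileSlope ha hs hseq hβ
    (neg_one_le_cos (2 * π * (ξ₁ - ξ₀) * t)) (cos_le_one _)
  refine ⟨_, fun η ↦ ?_, _, _, _, hw.mul_comp (k := fun η ↦ exp (-(β / 2)) * q *
    (exp (-((q * (η - m)) ^ 2 / (2 * β))) / β)) (fun η ↦ by positivity) hq m⟩
  rw [funext (norm_Vst_sq hξ.ne hσ a t)]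
  exact (((hasDerivAt_normSqProfile hβ₀.ne' _).comp η
    (((hasDerivAt_id' η).sub_const m).const_mul q)).const_mul _).congr_deriv (by ring)

end STFT

/-- if `s` is the unique positive solution of `ln(s/a) = (1/2)(s − 1/s)` and
`Δ > Δ_c = (1+s)/(πσ√(2s))`, then for every `t` the map `η ↦ |V(t,η)|` has exactly two
local-maximum points and exactly one local-minimum point on `ℝ`. -/
theorem stmt3 (ξ₀ ξ₁ a σ s : ℝ) (hξ : ξ₀ < ξ₁) (ha : 0 < a) (hσ : 0 < σ)
    (hs : 0 < s) (hseq : Real.log (s / a) = (1 / 2) * (s - 1 / s))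
    (hΔ : (1 + s) / (Real.pi * σ * Real.sqrt (2 * s)) < ξ₁ - ξ₀) :
    ∀ t : ℝ,
      (∃ η₁ η₂ : ℝ, η₁ ≠ η₂ ∧ IsLocalMax (fun η => ‖Vst ξ₀ ξ₁ a σ t η‖) η₁ ∧
          IsLocalMax (fun η => ‖Vst ξ₀ ξ₁ a σ t η‖) η₂ ∧
          ∀ η : ℝ, IsLocalMax (fun η => ‖Vst ξ₀ ξ₁ a σ t η‖) η → η = η₁ ∨ η = η₂) ∧
      (∃! η : ℝ, IsLocalMin (fun η => ‖Vst ξ₀ ξ₁ a σ t η‖) η) := by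
  intro t
  obtain ⟨F', hF', w₁, w₂, w₃, hw⟩ := exists_isPosNegPosNeg_deriv_norm_Vst_sq hξ ha hσ.ne' hs
    hseq (sq_one_add_div_lt_of_div_sqrt_lt hs hσ hΔ) t
  have hnorm : ∀ η, 0 ≤ ‖Vst ξ₀ ξ₁ a σ t η‖ := fun η ↦ norm_nonneg _
  have hmax : ∀ η, IsLocalMax (fun η ↦ ‖Vst ξ₀ ξ₁ a σ t η‖) η ↔ η = w₁ ∨ η = w₃ := fun η ↦
    (isLocalMax_sq_iff hnorm).symm.trans (hw.isLocalMax_iff_and_isLocalMin_iff hF' η).1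
  have hmin : ∀ η, IsLocalMin (fun η ↦ ‖Vst ξ₀ ξ₁ a σ t η‖) η ↔ η = w₂ := fun η ↦
    (isLocalMin_sq_iff hnorm).symm.trans (hw.isLocalMax_iff_and_isLocalMin_iff hF' η).2
  exact ⟨⟨w₁, w₃, (hw.lt₁₂.trans hw.lt₂₃).ne, (hmax _).2 (.inl rfl), (hmax _).2 (.inr rfl),
    fun η ↦ (hmax η).1⟩, ⟨w₂, (hmin _).2 rfl, fun η ↦ (hmin η).1⟩⟩
end
end

section
/- Let a = 1 and 0 < Δ ≤ √2/(πσ). For k ∈ ℤ define the bifurcation times t*^{L,k} = k/Δ + arccos(π²σ²Δ² − 1)/(2πΔ) and t*^{R,k} = (k+1)/Δ − arccos(π²σ²Δ² − 1)/(2πΔ). Then for every t ∈ (t*^{L,k}, t*^{R,k}) the function η ↦ |V(t,η)| has exactly two local-maximum points on ℝ, while for every t ∈ (t*^{R,k−1}, t*^{L,k}) it has exactly one local-maximum point, located at η = ξ̄. -/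
noncomputable section

open MeasureTheory

/-- The left bifurcation time `t*^{L,k} = k/Δ + arccos(π²σ²Δ² − 1)/(2πΔ)`. -/
def tL (ξ₀ ξ₁ σ : ℝ) (k : ℤ) : ℝ :=
  (k : ℝ) / (ξ₁ - ξ₀) +
    Real.arccos (Real.pi ^ 2 * σ ^ 2 * (ξ₁ - ξ₀) ^ 2 - 1) / (2 * Real.pi * (ξ₁ - ξ₀))

/-- The right bifurcation time `t*^{R,k} = (k+1)/Δ − arccos(π²σ²Δ² − 1)/(2πΔ)`. -/
def tR (ξ₀ ξ₁ σ : ℝ) (k : ℤ) : ℝ :=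
  ((k : ℝ) + 1) / (ξ₁ - ξ₀) -
    Real.arccos (Real.pi ^ 2 * σ ^ 2 * (ξ₁ - ξ₀) ^ 2 - 1) / (2 * Real.pi * (ξ₁ - ξ₀))

/-!
Write `Δ = ξ₁ - ξ₀`, `b = π²σ²Δ²`, `c = cos (2πΔt)` and `v = 2π²σ²Δ (η - ξ̄)`. Expanding the modulus
gives `|V(t,η)|² = 2 e^{-b/2} g(v)` with `g(v) = e^{-v²/(2b)} (cosh v + c)`, so the local maxima in
`η` are those of `g` in `v`. Now `g'(v) = -(e^{-v²/(2b)}/b) H(v)` with the odd function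
`H(v) = v (cosh v + c) - b sinh v`, and `H''(v) = (2 - b) sinh v + v cosh v`, which is positive for
`v > 0` since `b ≤ 2`, i.e. `Δ ≤ √2/(πσ)`. So `H` is strictly convex on `[0, ∞)` with
`H(0) = 0` and `H'(0) = 1 - b + c`, and the sign of `H'(0)` decides everything: if `c > b - 1` then
`H > 0` on `(0, ∞)` and `g` has the single maximum `v = 0`; if `c < b - 1` then `H` has exactly one
positive zero `w`, and the maxima of `g` are `±w` while `0` becomes a local minimum. The bifurcation
times are precisely the `t` with `cos (2πΔt) = b - 1`.
-/

open Real Set Topology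

lemma isLocalMax_comp_iff_of_strictMonoOn {α β γ : Type*} [TopologicalSpace α] [LinearOrder β]
    [Preorder γ] {f : α → β} {g : β → γ} {s : Set β} {a : α} (hg : StrictMonoOn g s)
    (hf : ∀ x, f x ∈ s) : IsLocalMax (g ∘ f) a ↔ IsLocalMax f a := by
  simp only [IsLocalMax, IsMaxFilter, Function.comp_apply, hg.le_iff_le (hf _) (hf _)]

lemma isLocalMax_comp_homeomorph_iff {X Y β : Type*} [TopologicalSpace X] [TopologicalSpace Y]
    [Preorder β] {f : Y → β} (e : X ≃ₜ Y) {x : X} : IsLocalMax (f ∘ e) x ↔ IsLocalMax f (e x) := by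
  refine ⟨fun h => ?_, fun h => h.comp_continuous e.continuous.continuousAt⟩
  have := (e.symm_apply_apply x ▸ h).comp_continuous e.symm.continuous.continuousAt
  simpa [Function.comp_def] using this

lemma not_isLocalMax_of_strictMonoOn_Icc {f : ℝ → ℝ} {a b : ℝ} (hab : a < b)
    (hf : StrictMonoOn f (Icc a b)) : ¬IsLocalMax f a := by
  intro h
  obtain ⟨x, hfx, hx⟩ := ((h.filter_mono nhdsWithin_le_nhds).and (Ioo_mem_nhdsGT hab)).exists
  exact (hf (left_mem_Icc.2 hab.le) (Ioo_subset_Icc_self hx) hx.1).not_ge hfx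

lemma cos_lt_of_arccos_lt {x y : ℝ} (hy₁ : -1 ≤ y) (hy₂ : y ≤ 1) (h₁ : arccos y < x)
    (h₂ : x < 2 * π - arccos y) : cos x < y := by
  have hα := arccos_nonneg y
  have hαπ := arccos_le_pi y
  conv_rhs => rw [← cos_arccos hy₁ hy₂]
  rcases le_or_gt x π with hx | hx
  · exact strictAntiOn_cos ⟨hα, hαπ⟩ ⟨hα.trans h₁.le, hx⟩ h₁
  · rw [← cos_two_pi_sub]
    exact strictAntiOn_cos ⟨hα, hαπ⟩ ⟨by linarith, by linarith⟩ (by linarith)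

lemma lt_cos_of_abs_lt_arccos {x y : ℝ} (hy₁ : -1 ≤ y) (hy₂ : y ≤ 1) (h : |x| < arccos y) :
    y < cos x := by
  conv_lhs => rw [← cos_arccos hy₁ hy₂]
  rw [← cos_abs x]
  exact strictAntiOn_cos ⟨abs_nonneg x, h.le.trans (arccos_le_pi y)⟩
    ⟨arccos_nonneg y, arccos_le_pi y⟩ h

def gaussProfile (b c v : ℝ) : ℝ := exp (-(v ^ 2 / (2 * b))) * (cosh v + c)

def gaussProfileCrit (b c v : ℝ) : ℝ := v * (cosh v + c) - b * sinh v

section Crit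

variable (b c : ℝ)

lemma gaussProfileCrit_neg (v : ℝ) : gaussProfileCrit b c (-v) = -gaussProfileCrit b c v := by
  simp only [gaussProfileCrit, cosh_neg, sinh_neg]
  ring

lemma continuous_gaussProfileCrit : Continuous (gaussProfileCrit b c) := by
  unfold gaussProfileCrit
  fun_prop

lemma hasDerivAt_gaussProfileCrit (v : ℝ) :
    HasDerivAt (gaussProfileCrit b c) ((1 - b) * cosh v + v * sinh v + c) v :=
  (((hasDerivAt_id' v).mul ((hasDerivAt_cosh v).add_const c)).sub
    ((hasDerivAt_sinh v).const_mul b)).congr_deriv (by ring)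

lemma gaussProfileCrit_zero : gaussProfileCrit b c 0 = 0 := by
  simp [gaussProfileCrit]

lemma slope_gaussProfileCrit_zero (v : ℝ) :
    slope (gaussProfileCrit b c) 0 v = gaussProfileCrit b c v / v := by
  simp [slope_def_field, gaussProfileCrit_zero]

variable {b c}

lemma strictConvexOn_gaussProfileCrit (hb : b ≤ 2) :
    StrictConvexOn ℝ (Ici 0) (gaussProfileCrit b c) := by
  have hderiv : deriv (gaussProfileCrit b c) = fun v => (1 - b) * cosh v + v * sinh v + c :=
    funext fun v => (hasDerivAt_gaussProfileCrit b c v).deriv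
  refine StrictMonoOn.strictConvexOn_of_deriv (convex_Ici 0)
    (continuous_gaussProfileCrit b c).continuousOn ?_
  rw [hderiv, interior_Ici]
  refine strictMonoOn_of_deriv_pos (convex_Ioi 0) (by fun_prop) fun v hv => ?_
  rw [interior_Ioi, mem_Ioi] at hv
  have hd : HasDerivAt (fun v => (1 - b) * cosh v + v * sinh v + c)
      ((2 - b) * sinh v + v * cosh v) v :=
    ((((hasDerivAt_cosh v).const_mul (1 - b)).add
      ((hasDerivAt_id' v).mul (hasDerivAt_sinh v))).add_const c).congr_deriv (by ring)
  rw [hd.deriv]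
  have := sinh_pos_iff.2 hv
  have := cosh_pos v
  nlinarith

lemma gaussProfileCrit_pos (hb : b ≤ 2) (hc : b - 1 < c) {v : ℝ} (hv : 0 < v) :
    0 < gaussProfileCrit b c v := by
  have hslope := (strictConvexOn_gaussProfileCrit (c := c) hb).convexOn.deriv_le_slope
    self_mem_Ici hv.le hv (hasDerivAt_gaussProfileCrit b c 0).differentiableAt
  rw [(hasDerivAt_gaussProfileCrit b c 0).deriv, slope_gaussProfileCrit_zero,
    le_div_iff₀ hv] at hslope
  simp only [cosh_zero, sinh_zero] at hslope
  nlinarith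

lemma strictMonoOn_gaussProfileCrit_div (hb : b ≤ 2) :
    StrictMonoOn (fun v => gaussProfileCrit b c v / v) (Ioi 0) :=
  fun x (hx : 0 < x) y (hy : 0 < y) hxy => by
    simpa [gaussProfileCrit_zero] using
      (strictConvexOn_gaussProfileCrit (c := c) hb).secant_strict_mono
        self_mem_Ici hx.le hy.le hx.ne' hy.ne' hxy

lemma exists_gaussProfileCrit_neg (hc : c < b - 1) : ∃ v, 0 < v ∧ gaussProfileCrit b c v < 0 := by
  have hd : HasDerivAt (gaussProfileCrit b c) (1 - b + c) 0 := by
    simpa using hasDerivAt_gaussProfileCrit b c 0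
  have hslope : ∀ᶠ v in 𝓝[>] 0, slope (gaussProfileCrit b c) 0 v < 0 :=
    ((hasDerivAt_iff_tendsto_slope.1 hd).mono_left (nhdsGT_le_nhdsNE 0)).eventually
      (gt_mem_nhds (by linarith))
  obtain ⟨v, hs, hv⟩ := (hslope.and self_mem_nhdsWithin).exists
  rw [slope_gaussProfileCrit_zero, div_lt_iff₀ hv, zero_mul] at hs
  exact ⟨v, hv, hs⟩

lemma gaussProfileCrit_four_pos (hb : b ≤ 2) (hc : -1 ≤ c) : 0 < gaussProfileCrit b c 4 := by
  have he : 5 < exp 4 := by linarith [add_one_lt_exp (x := 4) (by norm_num)]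
  have he' : 0 < exp (-4) := exp_pos _
  have he'' : exp (-4) < 1 := exp_lt_one_iff.2 (by norm_num)
  simp only [gaussProfileCrit, cosh_eq, sinh_eq]
  nlinarith [mul_nonneg (sub_nonneg.2 hb) (by linarith : (0 : ℝ) ≤ exp 4 - exp (-4))]

lemma exists_gaussProfileCrit_sign (hb : b ≤ 2) (hc₁ : -1 ≤ c) (hc : c < b - 1) :
    ∃ w, 0 < w ∧ (∀ v, 0 < v → v < w → gaussProfileCrit b c v < 0) ∧
      ∀ v, w < v → 0 < gaussProfileCrit b c v := by
  obtain ⟨v₁, hv₁, hv₁neg⟩ := exists_gaussProfileCrit_neg hc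
  obtain ⟨w, hw, hw0⟩ : ∃ w ∈ uIcc v₁ 4, gaussProfileCrit b c w = 0 :=
    intermediate_value_uIcc (continuous_gaussProfileCrit b c).continuousOn
      (mem_uIcc.2 (Or.inl ⟨hv₁neg.le, (gaussProfileCrit_four_pos hb hc₁).le⟩))
  have hw_pos : 0 < w := by rcases mem_uIcc.1 hw with h | h <;> linarith [h.1]
  have hmono := strictMonoOn_gaussProfileCrit_div (c := c) hb
  refine ⟨w, hw_pos, fun v hv hvw => ?_, fun v hwv => ?_⟩
  · have : gaussProfileCrit b c v / v < gaussProfileCrit b c w / w := hmono hv hw_pos hvw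
    rwa [hw0, zero_div, div_lt_iff₀ hv, zero_mul] at this
  · have : gaussProfileCrit b c w / w < gaussProfileCrit b c v / v :=
      hmono hw_pos (hw_pos.trans hwv) hwv
    rwa [hw0, zero_div, lt_div_iff₀ (hw_pos.trans hwv), zero_mul] at this

end Crit

section Profile

variable {b c : ℝ}

lemma gaussProfile_nonneg (hc : -1 ≤ c) (v : ℝ) : 0 ≤ gaussProfile b c v :=
  mul_nonneg (exp_pos _).le (by linarith [one_le_cosh v])

lemma hasDerivAt_gaussProfile (hb : b ≠ 0) (v : ℝ) :
    HasDerivAt (gaussProfile b c) (-(exp (-(v ^ 2 / (2 * b))) / b * gaussProfileCrit b c v)) v := by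
  refine ((((hasDerivAt_pow 2 v).div_const (2 * b)).neg.exp).mul
    ((hasDerivAt_cosh v).add_const c)).congr_deriv ?_
  simp only [gaussProfileCrit, Pi.neg_apply]
  field_simp
  ring

lemma deriv_gaussProfile_pos_iff (hb : 0 < b) (v : ℝ) :
    0 < deriv (gaussProfile b c) v ↔ gaussProfileCrit b c v < 0 := by
  rw [(hasDerivAt_gaussProfile hb.ne' v).deriv, ← mul_neg,
    mul_pos_iff_of_pos_left (by positivity), neg_pos]

lemma deriv_gaussProfile_neg_iff (hb : 0 < b) (v : ℝ) :
    deriv (gaussProfile b c) v < 0 ↔ 0 < gaussProfileCrit b c v := by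
  rw [(hasDerivAt_gaussProfile hb.ne' v).deriv, neg_lt_zero,
    mul_pos_iff_of_pos_left (by positivity)]

lemma gaussProfileCrit_eq_zero_of_isLocalMax (hb : 0 < b) {v : ℝ}
    (h : IsLocalMax (gaussProfile b c) v) : gaussProfileCrit b c v = 0 := by
  simpa [hb.ne', (exp_pos _).ne'] using h.hasDerivAt_eq_zero (hasDerivAt_gaussProfile hb.ne' v)

lemma isLocalMax_gaussProfile_of_crit_neg_of_pos (hb : 0 < b) {x y z : ℝ} (hxy : x < y)
    (hyz : y < z) (hl : ∀ v ∈ Ioo x y, gaussProfileCrit b c v < 0)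
    (hr : ∀ v ∈ Ioo y z, 0 < gaussProfileCrit b c v) :
    IsLocalMax (gaussProfile b c) y :=
  isLocalMax_of_deriv_Ioo hxy hyz (hasDerivAt_gaussProfile hb.ne' y).continuousAt
    (fun v _ => (hasDerivAt_gaussProfile hb.ne' v).differentiableAt.differentiableWithinAt)
    (fun v _ => (hasDerivAt_gaussProfile hb.ne' v).differentiableAt.differentiableWithinAt)
    (fun v hv => ((deriv_gaussProfile_pos_iff hb v).2 (hl v hv)).le)
    (fun v hv => ((deriv_gaussProfile_neg_iff hb v).2 (hr v hv)).le)

lemma isLocalMax_gaussProfile_iff_eq_zero (hb : 0 < b) (hb₂ : b ≤ 2) (hc : b - 1 < c) {v : ℝ} :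
    IsLocalMax (gaussProfile b c) v ↔ v = 0 := by
  have hpos : ∀ v, 0 < v → 0 < gaussProfileCrit b c v := fun v => gaussProfileCrit_pos hb₂ hc
  have hneg : ∀ v, v < 0 → gaussProfileCrit b c v < 0 := fun v hv => by
    linarith [gaussProfileCrit_neg b c v, hpos (-v) (neg_pos.2 hv)]
  refine ⟨fun h => ?_, ?_⟩
  · have hcrit := gaussProfileCrit_eq_zero_of_isLocalMax hb h
    rcases lt_trichotomy v 0 with hv | hv | hv
    · linarith [hneg v hv]
    · exact hv
    · linarith [hpos v hv]
  · rintro rfl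
    exact isLocalMax_gaussProfile_of_crit_neg_of_pos hb neg_one_lt_zero one_pos
      (fun v hv => hneg v hv.2) (fun v hv => hpos v hv.1)

lemma exists_isLocalMax_gaussProfile_iff (hb : 0 < b) (hb₂ : b ≤ 2) (hc₁ : -1 ≤ c)
    (hc : c < b - 1) : ∃ w, 0 < w ∧ ∀ v, IsLocalMax (gaussProfile b c) v ↔ v = w ∨ v = -w := by
  obtain ⟨w, hw, hneg, hpos⟩ := exists_gaussProfileCrit_sign hb₂ hc₁ hc
  have hcrit_ne : ∀ v, 0 < v → v ≠ w → gaussProfileCrit b c v ≠ 0 := fun v hv hvw => by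
    rcases hvw.lt_or_gt with h | h
    · exact (hneg v hv h).ne
    · exact (hpos v h).ne'
  have hnot_max : ¬IsLocalMax (gaussProfile b c) 0 := by
    refine not_isLocalMax_of_strictMonoOn_Icc hw (strictMonoOn_of_deriv_pos (convex_Icc 0 w)
      (fun v _ => (hasDerivAt_gaussProfile hb.ne' v).continuousAt.continuousWithinAt)
      fun v hv => ?_)
    rw [interior_Icc] at hv
    exact (deriv_gaussProfile_pos_iff hb v).2 (hneg v hv.1 hv.2)
  refine ⟨w, hw, fun v => ⟨fun h => ?_, ?_⟩⟩
  · have hcrit := gaussProfileCrit_eq_zero_of_isLocalMax hb h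
    rcases lt_trichotomy v 0 with hv | rfl | hv
    · refine Or.inr (neg_eq_iff_eq_neg.1 (not_ne_iff.1 fun hvw => ?_))
      exact hcrit_ne (-v) (neg_pos.2 hv) hvw (by rw [gaussProfileCrit_neg, hcrit, neg_zero])
    · exact absurd h hnot_max
    · exact Or.inl (not_ne_iff.1 fun hvw => hcrit_ne v hv hvw hcrit)
  · rintro (rfl | rfl)
    · exact isLocalMax_gaussProfile_of_crit_neg_of_pos hb hw (lt_add_one v)
        (fun v hv => hneg v hv.1 hv.2) (fun v hv => hpos v hv.1)
    · refine isLocalMax_gaussProfile_of_crit_neg_of_pos hb (sub_one_lt (-w)) (neg_lt_zero.2 hw)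
        (fun v hv => ?_) (fun v hv => ?_)
      · linarith [gaussProfileCrit_neg b c v, hpos (-v) (by linarith [hv.2])]
      · linarith [gaussProfileCrit_neg b c v, hneg (-v) (by linarith [hv.2]) (by linarith [hv.1])]

end Profile

lemma norm_Vst_one (ξ₀ ξ₁ σ t η : ℝ) :
    ‖Vst ξ₀ ξ₁ 1 σ t η‖ =
      √(exp (-(π ^ 2 * σ ^ 2 * (η - ξ₀) ^ 2)) ^ 2 + exp (-(π ^ 2 * σ ^ 2 * (η - ξ₁) ^ 2)) ^ 2 +
        2 * cos (2 * π * (ξ₁ - ξ₀) * t) *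
          (exp (-(π ^ 2 * σ ^ 2 * (η - ξ₀) ^ 2)) * exp (-(π ^ 2 * σ ^ 2 * (η - ξ₁) ^ 2)))) := by
  set A := exp (-(π ^ 2 * σ ^ 2 * (η - ξ₀) ^ 2))
  set B := exp (-(π ^ 2 * σ ^ 2 * (η - ξ₁) ^ 2))
  set θ := 2 * π * (ξ₁ - ξ₀) * t with hθ
  have hphase : ‖Complex.exp (2 * π * Complex.I * ξ₀ * t)‖ = 1 := by
    rw [Complex.norm_exp]
    simp
  have hV : Vst ξ₀ ξ₁ 1 σ t η = Complex.exp (2 * π * Complex.I * ξ₀ * t) *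
      (((A + B * cos θ : ℝ) : ℂ) + ((B * sin θ : ℝ) : ℂ) * Complex.I) := by
    have harg : 2 * (π : ℂ) * Complex.I * ((ξ₁ : ℂ) - ξ₀) * t = (θ : ℂ) * Complex.I := by
      rw [hθ]; push_cast; ring
    rw [Vst, harg, Complex.exp_mul_I, ← Complex.ofReal_cos, ← Complex.ofReal_sin]
    simp only [Complex.ofReal_add, Complex.ofReal_mul, Complex.ofReal_one, one_mul]
    ring
  rw [hV, norm_mul, hphase, one_mul, Complex.norm_add_mul_I]
  congr 1
  linear_combination B ^ 2 * sin_sq_add_cos_sq θ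

lemma exp_sq_add_exp_sq_add_eq_gaussProfile (β c ξ₀ ξ₁ η : ℝ) (hξ : ξ₀ ≠ ξ₁) :
    exp (-(β * (η - ξ₀) ^ 2)) ^ 2 + exp (-(β * (η - ξ₁) ^ 2)) ^ 2 +
        2 * c * (exp (-(β * (η - ξ₀) ^ 2)) * exp (-(β * (η - ξ₁) ^ 2))) =
      2 * exp (-(β * (ξ₁ - ξ₀) ^ 2 / 2)) *
        gaussProfile (β * (ξ₁ - ξ₀) ^ 2) c (2 * β * (ξ₁ - ξ₀) * (η - (ξ₀ + ξ₁) / 2)) := by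
  set u := η - (ξ₀ + ξ₁) / 2
  have hv : (2 * β * (ξ₁ - ξ₀) * u) ^ 2 / (2 * (β * (ξ₁ - ξ₀) ^ 2)) = 2 * β * u ^ 2 := by
    have : ξ₁ - ξ₀ ≠ 0 := sub_ne_zero.2 hξ.symm
    field_simp
  have e₀ : exp (-(β * (η - ξ₀) ^ 2)) ^ 2 =
      exp (-(β * (ξ₁ - ξ₀) ^ 2 / 2)) * exp (-(2 * β * u ^ 2)) * exp (-(2 * β * (ξ₁ - ξ₀) * u)) := by
    rw [sq, ← exp_add, ← exp_add, ← exp_add]; congr 1; ring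
  have e₁ : exp (-(β * (η - ξ₁) ^ 2)) ^ 2 =
      exp (-(β * (ξ₁ - ξ₀) ^ 2 / 2)) * exp (-(2 * β * u ^ 2)) * exp (2 * β * (ξ₁ - ξ₀) * u) := by
    rw [sq, ← exp_add, ← exp_add, ← exp_add]; congr 1; ring
  have e₂ : exp (-(β * (η - ξ₀) ^ 2)) * exp (-(β * (η - ξ₁) ^ 2)) =
      exp (-(β * (ξ₁ - ξ₀) ^ 2 / 2)) * exp (-(2 * β * u ^ 2)) := by
    rw [← exp_add, ← exp_add]; congr 1; ring
  rw [gaussProfile, hv, cosh_eq, e₀, e₁, e₂]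
  ring

section STFT

variable {ξ₀ ξ₁ σ : ℝ}

lemma isLocalMax_norm_Vst_iff (hξ : ξ₀ ≠ ξ₁) (hσ : σ ≠ 0) (t η : ℝ) :
    IsLocalMax (fun η => ‖Vst ξ₀ ξ₁ 1 σ t η‖) η ↔
      IsLocalMax (gaussProfile (π ^ 2 * σ ^ 2 * (ξ₁ - ξ₀) ^ 2) (cos (2 * π * (ξ₁ - ξ₀) * t)))
        (2 * (π ^ 2 * σ ^ 2) * (ξ₁ - ξ₀) * (η - (ξ₀ + ξ₁) / 2)) := by
  have hβ : π ^ 2 * σ ^ 2 ≠ 0 := by positivity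
  have hκ : 2 * (π ^ 2 * σ ^ 2) * (ξ₁ - ξ₀) ≠ 0 :=
    mul_ne_zero (by positivity) (sub_ne_zero.2 hξ.symm)
  let e : ℝ ≃ₜ ℝ := (Homeomorph.subRight ((ξ₀ + ξ₁) / 2)).trans (Homeomorph.mulLeft₀ _ hκ)
  have hK : 0 < 2 * exp (-(π ^ 2 * σ ^ 2 * (ξ₁ - ξ₀) ^ 2 / 2)) := by positivity
  have hfun : (fun η => ‖Vst ξ₀ ξ₁ 1 σ t η‖) =
      (fun y => √(2 * exp (-(π ^ 2 * σ ^ 2 * (ξ₁ - ξ₀) ^ 2 / 2)) * y)) ∘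
        gaussProfile (π ^ 2 * σ ^ 2 * (ξ₁ - ξ₀) ^ 2) (cos (2 * π * (ξ₁ - ξ₀) * t)) ∘ e := by
    funext η
    rw [Function.comp_apply, norm_Vst_one, exp_sq_add_exp_sq_add_eq_gaussProfile _ _ _ _ _ hξ]
    rfl
  have hmono : StrictMonoOn (fun y => √(2 * exp (-(π ^ 2 * σ ^ 2 * (ξ₁ - ξ₀) ^ 2 / 2)) * y))
      (Ici 0) := fun x hx y _ hxy =>
    sqrt_lt_sqrt (mul_nonneg hK.le hx) (mul_lt_mul_of_pos_left hxy hK)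
  rw [hfun]
  exact (isLocalMax_comp_iff_of_strictMonoOn hmono
    fun _ => gaussProfile_nonneg (neg_one_le_cos _) _).trans
      (isLocalMax_comp_homeomorph_iff (f := gaussProfile _ _) e)

lemma isLocalMax_norm_Vst_iff_eq_midpoint (hξ : ξ₀ < ξ₁) (hσ : 0 < σ)
    (hb : π ^ 2 * σ ^ 2 * (ξ₁ - ξ₀) ^ 2 ≤ 2) {t : ℝ}
    (hc : π ^ 2 * σ ^ 2 * (ξ₁ - ξ₀) ^ 2 - 1 < cos (2 * π * (ξ₁ - ξ₀) * t)) (η : ℝ) :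
    IsLocalMax (fun η => ‖Vst ξ₀ ξ₁ 1 σ t η‖) η ↔ η = (ξ₀ + ξ₁) / 2 := by
  have hΔ : 0 < ξ₁ - ξ₀ := sub_pos.2 hξ
  rw [isLocalMax_norm_Vst_iff hξ.ne hσ.ne',
    isLocalMax_gaussProfile_iff_eq_zero (mul_pos (by positivity) (pow_pos hΔ 2)) hb hc,
    mul_eq_zero, or_iff_right (mul_pos (by positivity) hΔ).ne', sub_eq_zero]

lemma exists_isLocalMax_norm_Vst_iff (hξ : ξ₀ < ξ₁) (hσ : 0 < σ)
    (hb : π ^ 2 * σ ^ 2 * (ξ₁ - ξ₀) ^ 2 ≤ 2) {t : ℝ}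
    (hc : cos (2 * π * (ξ₁ - ξ₀) * t) < π ^ 2 * σ ^ 2 * (ξ₁ - ξ₀) ^ 2 - 1) :
    ∃ η₁ η₂, η₁ ≠ η₂ ∧ ∀ η, IsLocalMax (fun η => ‖Vst ξ₀ ξ₁ 1 σ t η‖) η ↔ η = η₁ ∨ η = η₂ := by
  have hΔ : 0 < ξ₁ - ξ₀ := sub_pos.2 hξ
  obtain ⟨w, hw, hmax⟩ := exists_isLocalMax_gaussProfile_iff
    (mul_pos (by positivity) (pow_pos hΔ 2)) hb (neg_one_le_cos _) hc
  set κ := 2 * (π ^ 2 * σ ^ 2) * (ξ₁ - ξ₀)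
  have hκ : 0 < κ := mul_pos (by positivity) hΔ
  have hsolve (η x : ℝ) : κ * (η - (ξ₀ + ξ₁) / 2) = x ↔ η = (ξ₀ + ξ₁) / 2 + x / κ := by
    rw [← sub_eq_iff_eq_add', eq_div_iff hκ.ne', mul_comm]
  refine ⟨(ξ₀ + ξ₁) / 2 + w / κ, (ξ₀ + ξ₁) / 2 + -w / κ, fun h => ?_, fun η => ?_⟩
  · rw [add_right_inj, neg_div] at h
    linarith [div_pos hw hκ]
  · rw [isLocalMax_norm_Vst_iff hξ.ne hσ.ne', hmax, hsolve, hsolve]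

end STFT

section BifurcationTimes

variable {ξ₀ ξ₁ σ : ℝ}

lemma two_pi_mul_tL (hξ : ξ₀ ≠ ξ₁) (k : ℤ) :
    2 * π * (ξ₁ - ξ₀) * tL ξ₀ ξ₁ σ k =
      k * (2 * π) + arccos (π ^ 2 * σ ^ 2 * (ξ₁ - ξ₀) ^ 2 - 1) := by
  have : ξ₁ - ξ₀ ≠ 0 := sub_ne_zero.2 hξ.symm
  rw [tL]
  field_simp

lemma two_pi_mul_tR (hξ : ξ₀ ≠ ξ₁) (k : ℤ) :
    2 * π * (ξ₁ - ξ₀) * tR ξ₀ ξ₁ σ k =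
      k * (2 * π) + 2 * π - arccos (π ^ 2 * σ ^ 2 * (ξ₁ - ξ₀) ^ 2 - 1) := by
  have : ξ₁ - ξ₀ ≠ 0 := sub_ne_zero.2 hξ.symm
  rw [tR]
  field_simp

lemma cos_lt_of_tL_lt_of_lt_tR (hξ : ξ₀ < ξ₁) (hb : π ^ 2 * σ ^ 2 * (ξ₁ - ξ₀) ^ 2 ≤ 2) {k : ℤ}
    {t : ℝ} (h₁ : tL ξ₀ ξ₁ σ k < t) (h₂ : t < tR ξ₀ ξ₁ σ k) :
    cos (2 * π * (ξ₁ - ξ₀) * t) < π ^ 2 * σ ^ 2 * (ξ₁ - ξ₀) ^ 2 - 1 := by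
  have hκ : 0 < 2 * π * (ξ₁ - ξ₀) := mul_pos two_pi_pos (sub_pos.2 hξ)
  have h₁' := mul_lt_mul_of_pos_left h₁ hκ
  have h₂' := mul_lt_mul_of_pos_left h₂ hκ
  rw [two_pi_mul_tL hξ.ne] at h₁'
  rw [two_pi_mul_tR hξ.ne] at h₂'
  rw [← cos_sub_int_mul_two_pi _ k]
  exact cos_lt_of_arccos_lt (by nlinarith [sq_nonneg (π * σ * (ξ₁ - ξ₀))]) (by linarith)
    (by linarith) (by linarith)

lemma lt_cos_of_tR_lt_of_lt_tL (hξ : ξ₀ < ξ₁) (hb : π ^ 2 * σ ^ 2 * (ξ₁ - ξ₀) ^ 2 ≤ 2) {k : ℤ}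
    {t : ℝ} (h₁ : tR ξ₀ ξ₁ σ (k - 1) < t) (h₂ : t < tL ξ₀ ξ₁ σ k) :
    π ^ 2 * σ ^ 2 * (ξ₁ - ξ₀) ^ 2 - 1 < cos (2 * π * (ξ₁ - ξ₀) * t) := by
  have hκ : 0 < 2 * π * (ξ₁ - ξ₀) := mul_pos two_pi_pos (sub_pos.2 hξ)
  have h₁' := mul_lt_mul_of_pos_left h₁ hκ
  have h₂' := mul_lt_mul_of_pos_left h₂ hκ
  rw [two_pi_mul_tR hξ.ne] at h₁'
  rw [two_pi_mul_tL hξ.ne] at h₂'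
  push_cast at h₁'
  rw [← cos_sub_int_mul_two_pi _ k]
  exact lt_cos_of_abs_lt_arccos (by nlinarith [sq_nonneg (π * σ * (ξ₁ - ξ₀))]) (by linarith)
    (abs_lt.2 ⟨by linarith, by linarith⟩)

end BifurcationTimes

/-- with `a = 1` and `0 < Δ ≤ √2/(πσ)`, for `t ∈ (t*^{L,k}, t*^{R,k})` the map
`η ↦ |V(t,η)|` has exactly two local-maximum points, while for `t ∈ (t*^{R,k−1}, t*^{L,k})`
it has exactly one, located at `ξ̄`. -/
theorem stmt5 (ξ₀ ξ₁ σ : ℝ) (hξ : ξ₀ < ξ₁) (hσ : 0 < σ)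
    (hΔ : ξ₁ - ξ₀ ≤ Real.sqrt 2 / (Real.pi * σ)) :
    ∀ k : ℤ,
      (∀ t : ℝ, tL ξ₀ ξ₁ σ k < t → t < tR ξ₀ ξ₁ σ k →
        ∃ η₁ η₂ : ℝ, η₁ ≠ η₂ ∧ IsLocalMax (fun η => ‖Vst ξ₀ ξ₁ 1 σ t η‖) η₁ ∧
          IsLocalMax (fun η => ‖Vst ξ₀ ξ₁ 1 σ t η‖) η₂ ∧
          ∀ η : ℝ, IsLocalMax (fun η => ‖Vst ξ₀ ξ₁ 1 σ t η‖) η → η = η₁ ∨ η = η₂) ∧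
      (∀ t : ℝ, tR ξ₀ ξ₁ σ (k - 1) < t → t < tL ξ₀ ξ₁ σ k →
        IsLocalMax (fun η => ‖Vst ξ₀ ξ₁ 1 σ t η‖) ((ξ₀ + ξ₁) / 2) ∧
        ∀ η : ℝ, IsLocalMax (fun η => ‖Vst ξ₀ ξ₁ 1 σ t η‖) η → η = (ξ₀ + ξ₁) / 2) := by
  have hb : π ^ 2 * σ ^ 2 * (ξ₁ - ξ₀) ^ 2 ≤ 2 := by
    have h : π * σ * (ξ₁ - ξ₀) ≤ √2 := by
      rwa [le_div_iff₀ (by positivity), mul_comm] at hΔ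
    calc π ^ 2 * σ ^ 2 * (ξ₁ - ξ₀) ^ 2 = (π * σ * (ξ₁ - ξ₀)) ^ 2 := by ring
      _ ≤ √2 ^ 2 := by gcongr
      _ = 2 := sq_sqrt zero_le_two
  intro k
  refine ⟨fun t h₁ h₂ => ?_, fun t h₁ h₂ => ?_⟩
  · obtain ⟨η₁, η₂, hne, hmax⟩ :=
      exists_isLocalMax_norm_Vst_iff hξ hσ hb (cos_lt_of_tL_lt_of_lt_tR hξ hb h₁ h₂)
    exact ⟨η₁, η₂, hne, (hmax η₁).2 (Or.inl rfl), (hmax η₂).2 (Or.inr rfl), fun η => (hmax η).1⟩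
  · have hmax := isLocalMax_norm_Vst_iff_eq_midpoint hξ hσ hb (lt_cos_of_tR_lt_of_lt_tL hξ hb h₁ h₂)
    exact ⟨(hmax _).2 rfl, fun η => (hmax η).1⟩
end
end

section
/- V(t,η) = 0 if and only if there exists k ∈ ℤ such that t = (k + 1/2)/Δ and η = η_AVG = ξ̄ − (ln a)/(2π²σ²Δ); that is, the zero set of V is exactly the set of points (t_k⁻, η_AVG) indexed by k ∈ ℤ. -/
/-!
Dividing out the unimodular factor `e^{2πiξ₀t}`, `V = 0` says that the positive number
`A = e^{-π²σ²(η-ξ₀)²}` plus the positive number `a·C = a·e^{-π²σ²(η-ξ₁)²}` times the unit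
`e^{2πiΔt}` vanishes. Taking moduli forces `A = a·C`, and then `e^{2πiΔt} = -1`. The first
equation is linear in `η` after taking logarithms (the quadratic terms cancel), and the second
says that `2Δt` is an odd integer.
-/

noncomputable section

open MeasureTheory

open Complex Real

theorem Complex.exp_mul_I_eq_neg_one_iff (θ : ℝ) :
    exp (θ * I) = -1 ↔ ∃ k : ℤ, θ = (2 * k + 1) * π := by
  have hshift : exp (θ * I) = -1 ↔ exp (↑(θ - π) * I) = 1 := by
    rw [ofReal_sub, sub_mul, exp_sub, exp_pi_mul_I, div_neg, div_one, neg_eq_iff_eq_neg]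
  rw [hshift, exp_eq_one_iff]
  refine exists_congr fun k => ?_
  rw [show (k : ℂ) * (2 * π * I) = ↑(2 * π * k) * I by push_cast; ring,
    mul_left_inj' I_ne_zero, ofReal_inj]
  constructor <;> intro h <;> linarith

theorem Complex.ofReal_add_ofReal_mul_exp_mul_I_eq_zero_iff {p q : ℝ} (hp : 0 < p) (hq : 0 < q)
    (θ : ℝ) : (p : ℂ) + q * exp (θ * I) = 0 ↔ p = q ∧ exp (θ * I) = -1 := by
  constructor
  · intro h
    have hqp : (q : ℂ) * exp (θ * I) = -p := eq_neg_of_add_eq_zero_right h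
    have hnorm : q = p := by
      simpa [norm_exp_ofReal_mul_I, abs_of_pos hp, abs_of_pos hq] using congrArg norm hqp
    subst hnorm
    refine ⟨rfl, mul_left_cancel₀ (ofReal_ne_zero.2 hp.ne') ?_⟩
    rw [hqp, mul_neg_one]
  · rintro ⟨rfl, h⟩
    rw [h]; ring

theorem Real.mul_exp_neg_mul_sq_eq_iff {ξ₀ ξ₁ a c : ℝ} (hξ : ξ₀ ≠ ξ₁) (ha : 0 < a) (hc : c ≠ 0)
    (η : ℝ) :
    a * Real.exp (-(c * (η - ξ₁) ^ 2)) = Real.exp (-(c * (η - ξ₀) ^ 2)) ↔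
      η = (ξ₀ + ξ₁) / 2 - Real.log a / (2 * c * (ξ₁ - ξ₀)) := by
  have hΔ : ξ₁ - ξ₀ ≠ 0 := sub_ne_zero.2 hξ.symm
  conv_lhs => rw [← Real.exp_log ha, ← Real.exp_add, Real.exp_eq_exp]
  constructor <;> intro h
  · field_simp
    linear_combination h
  · rw [h]; field_simp; ring

theorem Vst_eq_zero_iff (ξ₀ ξ₁ a σ t η : ℝ) :
    Vst ξ₀ ξ₁ a σ t η = 0 ↔
      (Real.exp (-(π ^ 2 * σ ^ 2 * (η - ξ₀) ^ 2)) : ℂ) +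
        ↑(a * Real.exp (-(π ^ 2 * σ ^ 2 * (η - ξ₁) ^ 2))) *
          exp (↑(2 * π * (ξ₁ - ξ₀) * t) * I) = 0 := by
  rw [Vst, mul_eq_zero, or_iff_right (Complex.exp_ne_zero _)]
  push_cast
  ring_nf

/-- the zero set of `V` is exactly the set of points
`(t_k⁻, η_AVG) = ((k + 1/2)/Δ, ξ̄ − ln a/(2π²σ²Δ))`, `k ∈ ℤ`. -/
theorem stmt8 (ξ₀ ξ₁ a σ : ℝ) (hξ : ξ₀ < ξ₁) (ha : 0 < a) (hσ : 0 < σ) (t η : ℝ) :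
    Vst ξ₀ ξ₁ a σ t η = 0 ↔
      ∃ k : ℤ, t = ((k : ℝ) + 1 / 2) / (ξ₁ - ξ₀) ∧
        η = (ξ₀ + ξ₁) / 2 - Real.log a / (2 * Real.pi ^ 2 * σ ^ 2 * (ξ₁ - ξ₀)) := by
  have hΔ : ξ₁ - ξ₀ ≠ 0 := sub_ne_zero.2 hξ.ne'
  rw [Vst_eq_zero_iff, ofReal_add_ofReal_mul_exp_mul_I_eq_zero_iff (Real.exp_pos _)
    (mul_pos ha (Real.exp_pos _)), eq_comm, exp_mul_I_eq_neg_one_iff,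
    mul_exp_neg_mul_sq_eq_iff hξ.ne ha (by positivity), ← mul_assoc, and_comm, exists_and_right]
  refine and_congr_left' (exists_congr fun k => ?_)
  constructor <;> intro h
  · have h' : 2 * (ξ₁ - ξ₀) * t = 2 * k + 1 :=
      mul_right_cancel₀ pi_ne_zero (by linear_combination h)
    field_simp
    linarith
  · rw [h]
    field_simp
end
end

section
/- Define S₀(t,ξ) = (πσ√α)^{−1}·e^{2πiξ₀t}·e^{−(ξ₀−ξ)²/α} and S₁(t,ξ) = a·(πσ√α)^{−1}·e^{2πiξ₁t}·e^{−(ξ₁−ξ)²/α}. Then for fixed σ > 0, α > 0 and ξ₀ < ξ₁: (i) there exist constants C > 0 and a₀ > 0 such that for every 0 < a ≤ a₀ and all (t,ξ) ∈ ℝ², |S_V(α; t, ξ) − S₀(t,ξ)| ≤ C·a; (ii) there exist constants C′ > 0 and a₁ > 0 such that for every a ≥ a₁ and all (t,ξ) ∈ ℝ², |a^{−1}·S_V(α; t, ξ) − a^{−1}·S₁(t,ξ)| ≤ C′/a. -/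
/-!
Write `u = e^{2πiξ₀t} e^{-π²σ²(η-ξ₀)²}` and `w = a e^{2πiξ₁t} e^{-π²σ²(η-ξ₁)²}` for the two
components of `V = u + w`. Since `q = w / u`, the reassignment rule is the weighted mean
`η̂ = (ξ₀u + ξ₁w)/(u + w)`, so `η̂ - ξ₀ = Δw/(u + w)` and `η̂ - ξ₁ = -Δu/(u + w)`.
The kernel `z ↦ e^{-|z-ξ|²/α}` is bounded by `1` and `2/√α`-Lipschitz, hence the integrand
of `S_V` differs from `u e^{-(ξ₀-ξ)²/α} + w e^{-(ξ₁-ξ)²/α}` by `O(min(|u|, |w|))`: if one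
component dominates, `|u + w|` is comparable to it and the Lipschitz bound applies; otherwise
the two are comparable and the trivial bound suffices. Integrating `|w|` (resp. `|u|`) over `η`
gives a multiple of `a` (resp. of `1`), and both estimates follow.
-/

noncomputable section

open MeasureTheory
open scoped Classical

/-- `q(t,η) = a·e^{2πiΔt}·e^{2π²σ²Δ(η−ξ̄)}`. -/
def qFac (ξ₀ ξ₁ a σ t η : ℝ) : ℂ :=
  (a : ℂ) * Complex.exp (2 * Real.pi * Complex.I * (ξ₁ - ξ₀) * t) *
    (Real.exp (2 * Real.pi ^ 2 * σ ^ 2 * (ξ₁ - ξ₀) * (η - (ξ₀ + ξ₁) / 2)) : ℂ)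

/-- The synchrosqueezing reassignment rule `η̂_s(t,η) = (ξ₀ + ξ₁·q)/(1 + q)`. -/
def etaS (ξ₀ ξ₁ a σ t η : ℝ) : ℂ :=
  ((ξ₀ : ℂ) + (ξ₁ : ℂ) * qFac ξ₀ ξ₁ a σ t η) / (1 + qFac ξ₀ ξ₁ a σ t η)

/-- The synchrosqueezing transform, with integrand 0 where `V(t,η) = 0`. -/
def SV (ξ₀ ξ₁ a σ α t ξ : ℝ) : ℂ :=
  ((Real.sqrt (Real.pi * α) : ℝ) : ℂ)⁻¹ *
    ∫ η : ℝ, if Vst ξ₀ ξ₁ a σ t η = 0 then 0 else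
      Vst ξ₀ ξ₁ a σ t η *
        ((Real.exp (-(‖etaS ξ₀ ξ₁ a σ t η - (ξ : ℂ)‖ ^ 2 / α)) : ℝ) : ℂ)

/-- The synchrosqueezing transform of a single component `e^{2πiξjx}`. -/
def Ssingle (ξj σ α t ξ : ℝ) : ℂ :=
  ((Real.pi * σ * Real.sqrt α : ℝ) : ℂ)⁻¹ * Complex.exp (2 * Real.pi * Complex.I * ξj * t) *
    ((Real.exp (-((ξj - ξ) ^ 2 / α)) : ℝ) : ℂ)

open Complex (I)
open Real (pi)

section GaussianKernel

def gaussKernel (α ξ : ℝ) (z : ℂ) : ℂ := (Real.exp (-(‖z - ξ‖ ^ 2 / α)) : ℂ)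

variable {α : ℝ}

lemma abs_mul_exp_neg_sq_div_le (hα : 0 < α) (u : ℝ) :
    |u| * Real.exp (-(u ^ 2 / α)) ≤ √α := by
  have hs : 0 < √α := Real.sqrt_pos.mpr hα
  have hss : √α ^ 2 = α := Real.sq_sqrt hα.le
  rw [Real.exp_neg, ← div_eq_mul_inv, div_le_iff₀ (Real.exp_pos _)]
  have hexp : u ^ 2 / α + 1 ≤ Real.exp (u ^ 2 / α) := Real.add_one_le_exp _
  have hamgm : √α * |u| ≤ √α * √α * (u ^ 2 / α + 1) := by
    rw [← sq, hss, mul_add, mul_div_cancel₀ _ hα.ne', mul_one]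
    nlinarith [sq_nonneg (|u| - √α), sq_abs u]
  nlinarith [mul_le_mul_of_nonneg_left hexp hs.le]

lemma abs_exp_neg_sq_div_sub_le (hα : 0 < α) (x y : ℝ) :
    |Real.exp (-(x ^ 2 / α)) - Real.exp (-(y ^ 2 / α))| ≤ 2 / √α * |x - y| := by
  have hderiv : ∀ u : ℝ, HasDerivAt (fun u : ℝ => Real.exp (-(u ^ 2 / α)))
      (Real.exp (-(u ^ 2 / α)) * (-(2 * u / α))) u := fun u => by
    simpa using (((hasDerivAt_pow 2 u).div_const α).neg).exp
  have hbound : ∀ u : ℝ, ‖Real.exp (-(u ^ 2 / α)) * (-(2 * u / α))‖ ≤ 2 / √α := fun u => by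
    have hss : √α * √α = α := Real.mul_self_sqrt hα.le
    calc ‖Real.exp (-(u ^ 2 / α)) * (-(2 * u / α))‖
        = 2 / α * (|u| * Real.exp (-(u ^ 2 / α))) := by
          rw [Real.norm_eq_abs, abs_mul, abs_neg, abs_div, abs_mul, abs_two, abs_of_pos hα,
            abs_of_pos (Real.exp_pos _)]
          ring
      _ ≤ 2 / α * √α := by gcongr; exact abs_mul_exp_neg_sq_div_le hα u
      _ = 2 / √α := by
          rw [eq_div_iff (Real.sqrt_pos.mpr hα).ne', mul_assoc, hss, div_mul_cancel₀ _ hα.ne']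
  simpa [Real.norm_eq_abs] using Convex.norm_image_sub_le_of_norm_hasDerivWithin_le
    (fun u _ => (hderiv u).hasDerivWithinAt) (fun u _ => hbound u) convex_univ
    (Set.mem_univ y) (Set.mem_univ x)

lemma norm_gaussKernel_le_one (hα : 0 ≤ α) (ξ : ℝ) (z : ℂ) : ‖gaussKernel α ξ z‖ ≤ 1 := by
  rw [gaussKernel, Complex.norm_real, Real.norm_eq_abs, abs_of_pos (Real.exp_pos _),
    Real.exp_le_one_iff, neg_nonpos]
  positivity

lemma norm_gaussKernel_sub_le (hα : 0 < α) (ξ : ℝ) (z z' : ℂ) :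
    ‖gaussKernel α ξ z - gaussKernel α ξ z'‖ ≤ 2 / √α * ‖z - z'‖ := by
  rw [gaussKernel, gaussKernel, ← Complex.ofReal_sub, Complex.norm_real, Real.norm_eq_abs]
  calc _ ≤ 2 / √α * |‖z - ξ‖ - ‖z' - ξ‖| := abs_exp_neg_sq_div_sub_le hα _ _
    _ ≤ 2 / √α * ‖z - z'‖ := by
      gcongr
      simpa using abs_norm_sub_norm_le (z - ξ) (z' - ξ)

lemma gaussKernel_ofReal (α ξ x : ℝ) :
    gaussKernel α ξ x = (Real.exp (-((x - ξ) ^ 2 / α)) : ℂ) := by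
  rw [gaussKernel, ← Complex.ofReal_sub, Complex.norm_real, Real.norm_eq_abs, sq_abs]

lemma continuous_gaussKernel (α ξ : ℝ) : Continuous (gaussKernel α ξ) := by
  unfold gaussKernel; fun_prop

end GaussianKernel

section SqueezedPair

-- The integrand of `S_V` at a frequency where the two components of `V` take the values `u`, `w`.
def squeezedPair (φ : ℂ → ℂ) (x₀ x₁ u w : ℂ) : ℂ :=
  if u + w = 0 then 0 else (u + w) * φ ((x₀ * u + x₁ * w) / (u + w))

variable {φ : ℂ → ℂ} {L : ℝ} (x₀ x₁ u w : ℂ)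

lemma squeezedPair_comm : squeezedPair φ x₀ x₁ u w = squeezedPair φ x₁ x₀ w u := by
  simp only [squeezedPair, add_comm u w, add_comm (x₀ * u)]

lemma norm_squeezedPair_le (hφ : ∀ z, ‖φ z‖ ≤ 1) : ‖squeezedPair φ x₀ x₁ u w‖ ≤ ‖u + w‖ := by
  unfold squeezedPair
  split_ifs with h
  · simp [h]
  · simpa [norm_mul] using mul_le_mul_of_nonneg_left (hφ _) (norm_nonneg (u + w))

lemma norm_squeezedPair_sub_le_of_ne_zero (hL : ∀ z z', ‖φ z - φ z'‖ ≤ L * ‖z - z'‖)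
    (hs : u + w ≠ 0) :
    ‖squeezedPair φ x₀ x₁ u w - u * φ x₀ - w * φ x₁‖ ≤
      2 * L * ‖x₁ - x₀‖ * (‖u‖ * ‖w‖ / ‖u + w‖) := by
  set z := (x₀ * u + x₁ * w) / (u + w) with hz
  have hz₀ : z - x₀ = (x₁ - x₀) * w / (u + w) := by rw [hz]; field_simp; ring
  have hz₁ : z - x₁ = -((x₁ - x₀) * u / (u + w)) := by rw [hz]; field_simp; ring
  have hsplit : squeezedPair φ x₀ x₁ u w - u * φ x₀ - w * φ x₁ =
      u * (φ z - φ x₀) + w * (φ z - φ x₁) := by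
    rw [squeezedPair, if_neg hs]; ring
  rw [hsplit]
  calc _ ≤ ‖u‖ * (L * ‖z - x₀‖) + ‖w‖ * (L * ‖z - x₁‖) := by
        refine (norm_add_le _ _).trans ?_
        rw [norm_mul, norm_mul]
        gcongr <;> apply hL
    _ = 2 * L * ‖x₁ - x₀‖ * (‖u‖ * ‖w‖ / ‖u + w‖) := by
        rw [hz₀, hz₁, norm_neg, norm_div, norm_div, norm_mul, norm_mul]
        ring

lemma norm_squeezedPair_sub_le (hφ : ∀ z, ‖φ z‖ ≤ 1)
    (hL : ∀ z z', ‖φ z - φ z'‖ ≤ L * ‖z - z'‖) :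
    ‖squeezedPair φ x₀ x₁ u w - u * φ x₀ - w * φ x₁‖ ≤ (6 + 4 * L * ‖x₁ - x₀‖) * ‖w‖ := by
  have hL₀ : 0 ≤ L := by simpa using (norm_nonneg _).trans (hL 1 0)
  have hcrude : ‖squeezedPair φ x₀ x₁ u w - u * φ x₀ - w * φ x₁‖ ≤ 2 * (‖u‖ + ‖w‖) := by
    have hu : ‖u * φ x₀‖ ≤ ‖u‖ := by
      simpa [norm_mul] using mul_le_mul_of_nonneg_left (hφ x₀) (norm_nonneg u)
    have hw : ‖w * φ x₁‖ ≤ ‖w‖ := by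
      simpa [norm_mul] using mul_le_mul_of_nonneg_left (hφ x₁) (norm_nonneg w)
    linarith [norm_sub_le (squeezedPair φ x₀ x₁ u w - u * φ x₀) (w * φ x₁),
      norm_sub_le (squeezedPair φ x₀ x₁ u w) (u * φ x₀),
      norm_squeezedPair_le x₀ x₁ u w hφ, norm_add_le u w]
  rcases le_or_gt ‖u‖ (2 * ‖w‖) with hcomparable | hdominant
  · nlinarith [mul_nonneg (mul_nonneg hL₀ (norm_nonneg (x₁ - x₀))) (norm_nonneg w)]
  -- when `u` dominates, `|u + w| ≥ |u| / 2` keeps the reassignment close to `x₀`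
  have hs : ‖u‖ / 2 ≤ ‖u + w‖ := by
    have := norm_sub_norm_le u (-w)
    rw [norm_neg, sub_neg_eq_add] at this
    linarith
  have hspos : 0 < ‖u + w‖ := by linarith [norm_nonneg w]
  calc _ ≤ 2 * L * ‖x₁ - x₀‖ * (‖u‖ * ‖w‖ / ‖u + w‖) :=
        norm_squeezedPair_sub_le_of_ne_zero x₀ x₁ u w hL (norm_pos_iff.mp hspos)
    _ ≤ 2 * L * ‖x₁ - x₀‖ * (2 * ‖w‖) := by
        gcongr
        rw [div_le_iff₀ hspos]
        nlinarith [norm_nonneg w]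
    _ ≤ (6 + 4 * L * ‖x₁ - x₀‖) * ‖w‖ := by nlinarith [norm_nonneg w]

lemma norm_squeezedPair_sub_left_le (hφ : ∀ z, ‖φ z‖ ≤ 1)
    (hL : ∀ z z', ‖φ z - φ z'‖ ≤ L * ‖z - z'‖) :
    ‖squeezedPair φ x₀ x₁ u w - u * φ x₀‖ ≤ (7 + 4 * L * ‖x₁ - x₀‖) * ‖w‖ := by
  have hw : ‖w * φ x₁‖ ≤ ‖w‖ := by
    simpa [norm_mul] using mul_le_mul_of_nonneg_left (hφ x₁) (norm_nonneg w)
  calc _ ≤ ‖squeezedPair φ x₀ x₁ u w - u * φ x₀ - w * φ x₁‖ + ‖w * φ x₁‖ := by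
        simpa using norm_add_le (squeezedPair φ x₀ x₁ u w - u * φ x₀ - w * φ x₁) (w * φ x₁)
    _ ≤ (7 + 4 * L * ‖x₁ - x₀‖) * ‖w‖ := by
        linarith [norm_squeezedPair_sub_le x₀ x₁ u w hφ hL]

lemma norm_squeezedPair_sub_right_le (hφ : ∀ z, ‖φ z‖ ≤ 1)
    (hL : ∀ z z', ‖φ z - φ z'‖ ≤ L * ‖z - z'‖) :
    ‖squeezedPair φ x₀ x₁ u w - w * φ x₁‖ ≤ (7 + 4 * L * ‖x₁ - x₀‖) * ‖u‖ := by
  rw [squeezedPair_comm, ← norm_neg (x₁ - x₀), neg_sub]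
  exact norm_squeezedPair_sub_left_le x₁ x₀ w u hφ hL

lemma aestronglyMeasurable_squeezedPair {μ : Measure ℝ} {f g : ℝ → ℂ}
    (hφ : Continuous φ) (hf : Continuous f) (hg : Continuous g) :
    AEStronglyMeasurable (fun η => squeezedPair φ x₀ x₁ (f η) (g η)) μ := by
  refine (Measurable.ite ?_ measurable_const ?_).aestronglyMeasurable
  · exact (isClosed_eq (hf.add hg) continuous_const).measurableSet
  · exact (hf.add hg).measurable.mul
      (hφ.measurable.comp (((hf.measurable.const_mul x₀).add
        (hg.measurable.const_mul x₁)).div (hf.add hg).measurable))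

lemma Integrable.squeezedPair {f g : ℝ → ℂ} (hφc : Continuous φ) (hφ : ∀ z, ‖φ z‖ ≤ 1)
    (hf : Integrable f) (hg : Integrable g) (hfc : Continuous f) (hgc : Continuous g) :
    Integrable (fun η => squeezedPair φ x₀ x₁ (f η) (g η)) :=
  (hf.add hg).norm.mono' (aestronglyMeasurable_squeezedPair x₀ x₁ hφc hfc hgc)
    (.of_forall fun η => norm_squeezedPair_le x₀ x₁ (f η) (g η) hφ)

end SqueezedPair

section TwoComponentSignal

def harmonicSTFT (ξj σ t η : ℝ) : ℂ :=
  Complex.exp (2 * pi * I * ξj * t) * (Real.exp (-(pi ^ 2 * σ ^ 2 * (η - ξj) ^ 2)) : ℂ)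

variable {ξ₀ ξ₁ a σ α t ξ : ℝ}

lemma integrable_exp_neg_window (hσ : σ ≠ 0) (c : ℝ) :
    Integrable (fun η : ℝ => Real.exp (-(pi ^ 2 * σ ^ 2 * (η - c) ^ 2))) := by
  simpa [neg_mul] using
    (integrable_exp_neg_mul_sq (by positivity : 0 < pi ^ 2 * σ ^ 2)).comp_sub_right c

lemma integral_exp_neg_window (hσ : 0 < σ) (c : ℝ) :
    ∫ η : ℝ, Real.exp (-(pi ^ 2 * σ ^ 2 * (η - c) ^ 2)) = (σ * √pi)⁻¹ := by
  rw [integral_sub_right_eq_self (fun η => Real.exp (-(pi ^ 2 * σ ^ 2 * η ^ 2))) c]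
  simp_rw [show ∀ η : ℝ, -(pi ^ 2 * σ ^ 2 * η ^ 2) = -(pi ^ 2 * σ ^ 2) * η ^ 2 from
    fun η => by ring]
  rw [integral_gaussian, Real.sqrt_div Real.pi_pos.le,
    show pi ^ 2 * σ ^ 2 = (√pi * √pi * σ) ^ 2 by rw [Real.mul_self_sqrt Real.pi_pos.le]; ring,
    Real.sqrt_sq (by positivity)]
  field_simp

lemma norm_harmonicSTFT (ξj σ t η : ℝ) :
    ‖harmonicSTFT ξj σ t η‖ = Real.exp (-(pi ^ 2 * σ ^ 2 * (η - ξj) ^ 2)) := by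
  rw [harmonicSTFT, norm_mul, Complex.norm_exp, Complex.norm_real, Real.norm_eq_abs,
    abs_of_pos (Real.exp_pos _)]
  simp

lemma harmonicSTFT_ne_zero (ξj σ t η : ℝ) : harmonicSTFT ξj σ t η ≠ 0 :=
  norm_pos_iff.mp ((norm_harmonicSTFT ξj σ t η).symm ▸ Real.exp_pos _)

lemma continuous_harmonicSTFT (ξj σ t : ℝ) : Continuous (harmonicSTFT ξj σ t) := by
  unfold harmonicSTFT; fun_prop

lemma integrable_harmonicSTFT (hσ : σ ≠ 0) (ξj t : ℝ) : Integrable (harmonicSTFT ξj σ t) :=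
  (integrable_norm_iff (continuous_harmonicSTFT ξj σ t).aestronglyMeasurable).mp <| by
    simpa only [norm_harmonicSTFT] using integrable_exp_neg_window hσ ξj

lemma integral_harmonicSTFT (hσ : 0 < σ) (ξj t : ℝ) :
    ∫ η, harmonicSTFT ξj σ t η = Complex.exp (2 * pi * I * ξj * t) * ((σ * √pi)⁻¹ : ℝ) := by
  rw [← integral_exp_neg_window hσ ξj, ← integral_complex_ofReal, ← integral_const_mul]
  rfl

lemma cexp_phase_eq_mul (ξ₀ ξ₁ t : ℝ) : Complex.exp (2 * pi * I * ξ₁ * t) =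
    Complex.exp (2 * pi * I * ξ₀ * t) * Complex.exp (2 * pi * I * (ξ₁ - ξ₀) * t) := by
  rw [← Complex.exp_add]; ring_nf

lemma Vst_eq_add (ξ₀ ξ₁ a σ t η : ℝ) :
    Vst ξ₀ ξ₁ a σ t η = harmonicSTFT ξ₀ σ t η + a * harmonicSTFT ξ₁ σ t η := by
  rw [Vst, harmonicSTFT, harmonicSTFT, cexp_phase_eq_mul ξ₀ ξ₁ t]
  ring

lemma harmonicSTFT_mul_qFac (ξ₀ ξ₁ a σ t η : ℝ) :
    harmonicSTFT ξ₀ σ t η * qFac ξ₀ ξ₁ a σ t η = a * harmonicSTFT ξ₁ σ t η := by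
  have hwindow : Real.exp (-(pi ^ 2 * σ ^ 2 * (η - ξ₁) ^ 2)) =
      Real.exp (-(pi ^ 2 * σ ^ 2 * (η - ξ₀) ^ 2)) *
        Real.exp (2 * pi ^ 2 * σ ^ 2 * (ξ₁ - ξ₀) * (η - (ξ₀ + ξ₁) / 2)) := by
    rw [← Real.exp_add]; ring_nf
  rw [harmonicSTFT, harmonicSTFT, qFac, cexp_phase_eq_mul ξ₀ ξ₁ t, hwindow]
  push_cast
  ring

lemma etaS_eq_div (ξ₀ ξ₁ a σ t η : ℝ) :
    etaS ξ₀ ξ₁ a σ t η = (ξ₀ * harmonicSTFT ξ₀ σ t η + ξ₁ * (a * harmonicSTFT ξ₁ σ t η)) /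
      (harmonicSTFT ξ₀ σ t η + a * harmonicSTFT ξ₁ σ t η) := by
  rw [etaS, ← harmonicSTFT_mul_qFac ξ₀ ξ₁ a σ t η,
    ← mul_div_mul_left _ (1 + qFac ξ₀ ξ₁ a σ t η) (harmonicSTFT_ne_zero ξ₀ σ t η)]
  congr 1 <;> ring

lemma SV_eq_integral_squeezedPair (ξ₀ ξ₁ a σ α t ξ : ℝ) :
    SV ξ₀ ξ₁ a σ α t ξ = (√(pi * α) : ℂ)⁻¹ * ∫ η, squeezedPair (gaussKernel α ξ) ξ₀ ξ₁
      (harmonicSTFT ξ₀ σ t η) (a * harmonicSTFT ξ₁ σ t η) := by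
  simp only [SV, squeezedPair, Vst_eq_add, etaS_eq_div]
  rfl

lemma Ssingle_eq_integral (hσ : 0 < σ) (ξj α t ξ : ℝ) :
    Ssingle ξj σ α t ξ =
      (√(pi * α) : ℂ)⁻¹ * ∫ η, harmonicSTFT ξj σ t η * gaussKernel α ξ ξj := by
  rw [integral_mul_const, integral_harmonicSTFT hσ, gaussKernel_ofReal, Ssingle,
    Real.sqrt_mul Real.pi_pos.le]
  have hπ : (√pi : ℂ) ^ 2 = pi := by exact_mod_cast Real.sq_sqrt Real.pi_pos.le
  have hπ₀ : (√pi : ℂ) ≠ 0 := by exact_mod_cast (Real.sqrt_pos.mpr Real.pi_pos).ne'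
  push_cast
  field_simp
  rw [hπ]

lemma norm_SV_sub_mul_Ssingle_le (hσ : 0 < σ) (hα : 0 < α) (ξj ξk K : ℝ) (c : ℂ)
    (hle : ∀ η, ‖squeezedPair (gaussKernel α ξ) ξ₀ ξ₁ (harmonicSTFT ξ₀ σ t η)
        (a * harmonicSTFT ξ₁ σ t η) - c * (harmonicSTFT ξj σ t η * gaussKernel α ξ ξj)‖ ≤
      K * ‖harmonicSTFT ξk σ t η‖) :
    ‖SV ξ₀ ξ₁ a σ α t ξ - c * Ssingle ξj σ α t ξ‖ ≤ K * (pi * σ * √α)⁻¹ := by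
  have hF : Integrable fun η => squeezedPair (gaussKernel α ξ) ξ₀ ξ₁ (harmonicSTFT ξ₀ σ t η)
      (a * harmonicSTFT ξ₁ σ t η) :=
    Integrable.squeezedPair _ _ (continuous_gaussKernel α ξ) (norm_gaussKernel_le_one hα.le ξ)
      (integrable_harmonicSTFT hσ.ne' ξ₀ t) ((integrable_harmonicSTFT hσ.ne' ξ₁ t).const_mul _)
      (continuous_harmonicSTFT ξ₀ σ t) (continuous_const.mul (continuous_harmonicSTFT ξ₁ σ t))
  have hG : Integrable fun η => c * (harmonicSTFT ξj σ t η * gaussKernel α ξ ξj) :=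
    ((integrable_harmonicSTFT hσ.ne' ξj t).mul_const _).const_mul c
  have hbound : ‖∫ η, (squeezedPair (gaussKernel α ξ) ξ₀ ξ₁ (harmonicSTFT ξ₀ σ t η)
      (a * harmonicSTFT ξ₁ σ t η) - c * (harmonicSTFT ξj σ t η * gaussKernel α ξ ξj))‖ ≤
      K * (σ * √pi)⁻¹ := by
    rw [← integral_exp_neg_window hσ ξk, ← integral_const_mul]
    refine norm_integral_le_of_norm_le ((integrable_exp_neg_window hσ.ne' ξk).const_mul K)
      (.of_forall fun η => ?_)
    simpa only [norm_harmonicSTFT] using hle η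
  rw [SV_eq_integral_squeezedPair, Ssingle_eq_integral hσ, mul_left_comm c,
    ← integral_const_mul c, ← mul_sub, ← integral_sub hF hG, norm_mul, norm_inv,
    Complex.norm_real, Real.norm_of_nonneg (Real.sqrt_nonneg _)]
  calc _ ≤ (√(pi * α))⁻¹ * (K * (σ * √pi)⁻¹) := by gcongr
    _ = K * (√pi * √pi * σ * √α)⁻¹ := by rw [Real.sqrt_mul Real.pi_pos.le]; ring
    _ = K * (pi * σ * √α)⁻¹ := by rw [Real.mul_self_sqrt Real.pi_pos.le]

end TwoComponentSignal

theorem stmt17_general (ξ₀ ξ₁ σ α : ℝ) (hσ : 0 < σ) (hα : 0 < α) :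
    (∃ C > (0 : ℝ), ∃ a₀ > (0 : ℝ), ∀ a : ℝ, 0 < a → a ≤ a₀ → ∀ t ξ : ℝ,
      ‖SV ξ₀ ξ₁ a σ α t ξ - Ssingle ξ₀ σ α t ξ‖ ≤ C * a) ∧
    (∃ C' > (0 : ℝ), ∃ a₁ > (0 : ℝ), ∀ a : ℝ, a₁ ≤ a → ∀ t ξ : ℝ,
      ‖(a : ℂ)⁻¹ * SV ξ₀ ξ₁ a σ α t ξ - (a : ℂ)⁻¹ * ((a : ℂ) * Ssingle ξ₁ σ α t ξ)‖ ≤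
        C' / a) := by
  set K := 7 + 4 * (2 / √α) * ‖(ξ₁ : ℂ) - ξ₀‖
  have hC : 0 < K * (pi * σ * √α)⁻¹ := by
    have := Real.sqrt_pos.mpr hα
    positivity
  have hφ := norm_gaussKernel_le_one hα.le
  have hL := norm_gaussKernel_sub_le hα
  refine ⟨⟨_, hC, 1, one_pos, fun a ha _ t ξ => ?_⟩, ⟨_, hC, 1, one_pos, fun a ha t ξ => ?_⟩⟩
  · have h : ‖SV ξ₀ ξ₁ a σ α t ξ - 1 * Ssingle ξ₀ σ α t ξ‖ ≤ K * a * (pi * σ * √α)⁻¹ :=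
      norm_SV_sub_mul_Ssingle_le hσ hα ξ₀ ξ₁ (K * a) 1 fun η => by
        have := norm_squeezedPair_sub_left_le (ξ₀ : ℂ) ξ₁ (harmonicSTFT ξ₀ σ t η)
          (a * harmonicSTFT ξ₁ σ t η) (hφ ξ) (hL ξ)
        rw [one_mul]
        rwa [norm_mul, Complex.norm_real, Real.norm_of_nonneg ha.le, ← mul_assoc] at this
    simpa only [one_mul, mul_right_comm K a] using h
  · have h : ‖SV ξ₀ ξ₁ a σ α t ξ - a * Ssingle ξ₁ σ α t ξ‖ ≤ K * (pi * σ * √α)⁻¹ :=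
      norm_SV_sub_mul_Ssingle_le hσ hα ξ₁ ξ₀ K a fun η => by
        rw [← mul_assoc]
        exact norm_squeezedPair_sub_right_le (ξ₀ : ℂ) ξ₁ (harmonicSTFT ξ₀ σ t η)
          (a * harmonicSTFT ξ₁ σ t η) (hφ ξ) (hL ξ)
    rw [← mul_sub, norm_mul, norm_inv, Complex.norm_real,
      Real.norm_of_nonneg (zero_le_one.trans ha), div_eq_inv_mul]
    gcongr

/-- for fixed `σ, α, ξ₀ < ξ₁`: (i) `|S_V − S₀| ≤ C·a` uniformly in `(t,ξ)`
for all sufficiently small `a > 0`; (ii) `|a⁻¹S_V − a⁻¹S₁| ≤ C′/a` uniformly in `(t,ξ)`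
for all sufficiently large `a`. -/
theorem stmt17 (ξ₀ ξ₁ σ α : ℝ) (hξ : ξ₀ < ξ₁) (hσ : 0 < σ) (hα : 0 < α) :
    (∃ C > (0 : ℝ), ∃ a₀ > (0 : ℝ), ∀ a : ℝ, 0 < a → a ≤ a₀ → ∀ t ξ : ℝ,
      ‖SV ξ₀ ξ₁ a σ α t ξ - Ssingle ξ₀ σ α t ξ‖ ≤ C * a) ∧
    (∃ C' > (0 : ℝ), ∃ a₁ > (0 : ℝ), ∀ a : ℝ, a₁ ≤ a → ∀ t ξ : ℝ,
      ‖(a : ℂ)⁻¹ * SV ξ₀ ξ₁ a σ α t ξ - (a : ℂ)⁻¹ * ((a : ℂ) * Ssingle ξ₁ σ α t ξ)‖ ≤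
        C' / a) :=
  stmt17_general ξ₀ ξ₁ σ α hσ hα
end
end
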